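/- arXiv:1906.02949 — 8 statements merged into one kernel-verified Lean document; each statement's English description precedes it below -/
import Mathlib

section
/- For every odd prime p and integers 1 ≤ d ≤ n ≤ m, the exponent of the group G(p^m, p^n, p^d) equals p^m. -/
/-- The carrier of the group `G(p^m, p^n, p^d)`: the set
`ZMod (p^m) × ZMod (p^n) × ZMod (p^d)`. -/
def GCar (p m n d : ℕ) : Type :=
  ZMod (p ^ m) × ZMod (p ^ n) × ZMod (p ^ d)

/-- The multiplication of the group `G(p^m, p^n, p^d)`:
`(x1,x2,x3)·(y1,y2,y3) = (x1+y1, x2+y2, x3+y3 − x̄2·ȳ1)`,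
where the bars denote reduction modulo `p^d`. -/
def Gmul (p m n d : ℕ) (x y : GCar p m n d) : GCar p m n d :=
  (x.1 + y.1, x.2.1 + y.2.1,
    x.2.2 + y.2.2 - (ZMod.cast x.2.1 : ZMod (p ^ d)) * (ZMod.cast y.1 : ZMod (p ^ d)))

set_option linter.unnecessarySeqFocus false in
/-- The group `G(p^m, p^n, p^d)` (for `d ≤ n ≤ m`). The elements `a = (1,0,0)`,
`b = (0,1,0)`, `c = (0,0,1)` satisfy the defining relations
`a^(p^m) = b^(p^n) = c^(p^d) = 1`, `b⁻¹ab = ac`, `a⁻¹ca = b⁻¹cb = c`,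
and every element of the group is uniquely of the form `a^(x1) b^(x2) c^(x3)`. -/
def Ggroup (p m n d : ℕ) (hdn : d ≤ n) (hdm : d ≤ m) : Group (GCar p m n d) where
  mul := Gmul p m n d
  one := ((0, 0, 0) : ZMod (p ^ m) × ZMod (p ^ n) × ZMod (p ^ d))
  inv x := ((-x.1, -x.2.1,
    -x.2.2 - (ZMod.cast x.2.1 : ZMod (p ^ d)) * (ZMod.cast x.1 : ZMod (p ^ d))) :
      ZMod (p ^ m) × ZMod (p ^ n) × ZMod (p ^ d))
  mul_assoc x y z := by
    have h1 : (p : ℕ) ^ d ∣ p ^ n := pow_dvd_pow p hdn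
    have h2 : (p : ℕ) ^ d ∣ p ^ m := pow_dvd_pow p hdm
    show Gmul p m n d (Gmul p m n d x y) z = Gmul p m n d x (Gmul p m n d y z)
    refine Prod.ext ?_ (Prod.ext ?_ ?_) <;>
      simp [Gmul, ZMod.cast_add h1, ZMod.cast_add h2] <;> ring
  one_mul x := by
    show Gmul p m n d ((0, 0, 0) : ZMod (p ^ m) × ZMod (p ^ n) × ZMod (p ^ d)) x = x
    refine Prod.ext ?_ (Prod.ext ?_ ?_) <;> simp [Gmul, ZMod.cast_zero]
  mul_one x := by
    show Gmul p m n d x ((0, 0, 0) : ZMod (p ^ m) × ZMod (p ^ n) × ZMod (p ^ d)) = x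
    refine Prod.ext ?_ (Prod.ext ?_ ?_) <;> simp [Gmul, ZMod.cast_zero]
  inv_mul_cancel x := by
    have h1 : (p : ℕ) ^ d ∣ p ^ n := pow_dvd_pow p hdn
    have h2 : (p : ℕ) ^ d ∣ p ^ m := pow_dvd_pow p hdm
    show Gmul p m n d _ x = ((0, 0, 0) : ZMod (p ^ m) × ZMod (p ^ n) × ZMod (p ^ d))
    refine Prod.ext ?_ (Prod.ext ?_ ?_) <;>
      simp [Gmul, ZMod.cast_neg h1, ZMod.cast_neg h2] <;> ring

theorem Gpow (p m n d : ℕ) (hdn : d ≤ n) (hdm : d ≤ m) (x : GCar p m n d) (k : ℕ) :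
    letI : Group (GCar p m n d) := Ggroup p m n d hdn hdm
    x ^ k = ((((k : ZMod (p ^ m)) * x.1, (k : ZMod (p ^ n)) * x.2.1,
      (k : ZMod (p ^ d)) * x.2.2 - (k.choose 2 : ZMod (p ^ d)) *
        ((ZMod.cast x.2.1 : ZMod (p ^ d)) * (ZMod.cast x.1 : ZMod (p ^ d)))) :
        ZMod (p ^ m) × ZMod (p ^ n) × ZMod (p ^ d)) : GCar p m n d) := by
  letI : Group (GCar p m n d) := Ggroup p m n d hdn hdm
  have h1 : (p : ℕ) ^ d ∣ p ^ n := pow_dvd_pow p hdn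
  have h2 : (p : ℕ) ^ d ∣ p ^ m := pow_dvd_pow p hdm
  induction k with
  | zero =>
      show ((0, 0, 0) : ZMod (p ^ m) × ZMod (p ^ n) × ZMod (p ^ d)) = _
      refine Prod.ext ?_ (Prod.ext ?_ ?_) <;> simp
  | succ k ih =>
      rw [pow_succ, ih]
      show Gmul p m n d _ x = _
      have hch : ((k + 1).choose 2 : ℕ) = k.choose 2 + k := by
        simp [Nat.choose_succ_succ, Nat.choose_one_right, Nat.add_comm]
      refine Prod.ext ?_ (Prod.ext ?_ ?_) <;>
        simp [Gmul, hch, ZMod.cast_mul h1, ZMod.cast_natCast h1] <;>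
        push_cast <;> ring

/-- For every odd prime `p` and `1 ≤ d ≤ n ≤ m`, the exponent of the group
`G(p^m, p^n, p^d)` equals `p^m`. -/
theorem exponent_G (p m n d : ℕ) (hp : p.Prime) (hodd : Odd p)
    (hd : 1 ≤ d) (hdn : d ≤ n) (hnm : n ≤ m) :
    letI : Group (GCar p m n d) := Ggroup p m n d hdn (hdn.trans hnm)
    Monoid.exponent (GCar p m n d) = p ^ m := by
  letI : Group (GCar p m n d) := Ggroup p m n d hdn (hdn.trans hnm)
  have hdm : d ≤ m := hdn.trans hnm
  haveI : NeZero (p ^ m) := ⟨pow_ne_zero m hp.ne_zero⟩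
  haveI : NeZero (p ^ n) := ⟨pow_ne_zero n hp.ne_zero⟩
  haveI : NeZero (p ^ d) := ⟨pow_ne_zero d hp.ne_zero⟩
  -- p^d divides choose (p^m) 2
  have hodd' : Odd (p ^ m) := hodd.pow
  obtain ⟨t, ht⟩ : 2 ∣ p ^ m - 1 := by
    obtain ⟨s, hs⟩ := hodd'
    omega
  have hchoose : (p ^ m).choose 2 = p ^ m * t := by
    rw [Nat.choose_two_right, ht, Nat.mul_div_assoc _ ⟨t, rfl⟩,
      Nat.mul_div_cancel_left _ (by norm_num)]
  -- every element has x ^ p^m = 1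
  have hall : ∀ x : GCar p m n d, x ^ p ^ m = 1 := by
    intro x
    rw [Gpow p m n d hdn hdm x (p ^ m)]
    have e1 : ((p ^ m : ℕ) : ZMod (p ^ m)) = 0 := by
      exact_mod_cast ZMod.natCast_self (p ^ m)
    have e2 : ((p ^ m : ℕ) : ZMod (p ^ n)) = 0 :=
      (ZMod.natCast_eq_zero_iff _ _).mpr (pow_dvd_pow p hnm)
    have e3 : ((p ^ m : ℕ) : ZMod (p ^ d)) = 0 :=
      (ZMod.natCast_eq_zero_iff _ _).mpr (pow_dvd_pow p hdm)
    have e4 : (((p ^ m).choose 2 : ℕ) : ZMod (p ^ d)) = 0 :=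
      (ZMod.natCast_eq_zero_iff _ _).mpr
        (by rw [hchoose]; exact Dvd.dvd.mul_right (pow_dvd_pow p hdm) t)
    show _ = ((0, 0, 0) : ZMod (p ^ m) × ZMod (p ^ n) × ZMod (p ^ d))
    rw [e1, e2, e3, e4]
    simp
  have hdvd : Monoid.exponent (GCar p m n d) ∣ p ^ m :=
    Monoid.exponent_dvd_of_forall_pow_eq_one hall
  -- the element a = (1,0,0) has order p^m
  set a : GCar p m n d :=
    ((1, 0, 0) : ZMod (p ^ m) × ZMod (p ^ n) × ZMod (p ^ d)) with ha
  have hpow_a : a ^ Monoid.exponent (GCar p m n d) = 1 :=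
    Monoid.pow_exponent_eq_one a
  rw [Gpow p m n d hdn hdm a (Monoid.exponent (GCar p m n d))] at hpow_a
  have h1 : ((Monoid.exponent (GCar p m n d) : ℕ) : ZMod (p ^ m)) = 0 := by
    have := congrArg Prod.fst hpow_a
    simp [ha] at this; exact this.trans rfl
  have hdvd2 : p ^ m ∣ Monoid.exponent (GCar p m n d) :=
    (ZMod.natCast_eq_zero_iff _ _).mp h1
  exact Nat.dvd_antisymm hdvd hdvd2
end

section
/- Let p be an odd prime and 1 ≤ d ≤ n < m. Then the automorphism group of G = G(p^m, p^n, p^d) has order |Aut(G)| = p^(2d+3n+m−2)·(p−1)². -/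
set_option linter.unusedSectionVars false

section PowVal
variable {M : Type*} [Group M] {N : ℕ} [NeZero N] {g : M}

theorem powVal_natCast (hg : g ^ N = 1) (k : ℕ) : g ^ ((k : ZMod N)).val = g ^ k := by
  rw [ZMod.val_natCast, ← pow_eq_pow_mod _ hg]

theorem powVal_add (hg : g ^ N = 1) (u v : ZMod N) :
    g ^ (u + v).val = g ^ u.val * g ^ v.val := by
  rw [ZMod.val_add, ← pow_eq_pow_mod _ hg, pow_add]

theorem powVal_neg (hg : g ^ N = 1) (u : ZMod N) :
    g ^ (-u).val = (g ^ u.val)⁻¹ := by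
  have h : g ^ (-u).val * g ^ u.val = 1 := by
    rw [← powVal_add hg, neg_add_cancel, ZMod.val_zero, pow_zero]
  exact eq_inv_of_mul_eq_one_left h

theorem powVal_sub (hg : g ^ N = 1) (u v : ZMod N) :
    g ^ (u - v).val = g ^ u.val * (g ^ v.val)⁻¹ := by
  rw [sub_eq_add_neg, powVal_add hg, powVal_neg hg]

theorem powVal_mul (hg : g ^ N = 1) (u v : ZMod N) :
    g ^ (u * v).val = (g ^ u.val) ^ v.val := by
  rw [ZMod.val_mul, ← pow_eq_pow_mod _ hg, pow_mul]

end PowVal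

namespace GAux

variable (p m n d : ℕ)

/-- Central elements `(0,0,s)`. -/
def ctr (s : ZMod (p ^ d)) : GCar p m n d := ((0 : ZMod (p ^ m)), (0 : ZMod (p ^ n)), s)

/-- The "commutator parameter" of a pair `A B`. -/
def tt (A B : GCar p m n d) : ZMod (p ^ d) :=
  (ZMod.cast B.2.1 : ZMod (p ^ d)) * ZMod.cast A.1 -
    (ZMod.cast A.2.1 : ZMod (p ^ d)) * ZMod.cast B.1

variable (hdn : d ≤ n) (hdm : d ≤ m)

theorem mul_def (x y : GCar p m n d) :
    letI := Ggroup p m n d hdn hdm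
    x * y = (x.1 + y.1, x.2.1 + y.2.1,
      x.2.2 + y.2.2 - (ZMod.cast x.2.1 : ZMod (p ^ d)) * ZMod.cast y.1) := rfl

theorem one_def :
    letI := Ggroup p m n d hdn hdm
    (1 : GCar p m n d) = ((0 : ZMod (p ^ m)), (0 : ZMod (p ^ n)), (0 : ZMod (p ^ d))) := rfl

theorem inv_def (x : GCar p m n d) :
    letI := Ggroup p m n d hdn hdm
    x⁻¹ = ((-x.1, -x.2.1,
      -x.2.2 - (ZMod.cast x.2.1 : ZMod (p ^ d)) * ZMod.cast x.1) : GCar p m n d) := rfl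

theorem pow_def (x : GCar p m n d) (k : ℕ) :
    letI := Ggroup p m n d hdn hdm
    x ^ k = (((k : ZMod (p ^ m)) * x.1, (k : ZMod (p ^ n)) * x.2.1,
      (k : ZMod (p ^ d)) * x.2.2 - ((k.choose 2 : ℕ) : ZMod (p ^ d)) *
        ((ZMod.cast x.2.1 : ZMod (p ^ d)) * ZMod.cast x.1)) : GCar p m n d) := by
  letI := Ggroup p m n d hdn hdm
  have h1 : (p : ℕ) ^ d ∣ p ^ n := pow_dvd_pow p hdn
  induction k with
  | zero =>
    rw [pow_zero, one_def p m n d hdn hdm]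
    simp
    rfl
  | succ k ih =>
    rw [pow_succ, ih]; erw [mul_def p m n d hdn hdm]
    have hcast : (ZMod.cast ((k : ZMod (p ^ n)) * x.2.1) : ZMod (p ^ d)) =
        (k : ZMod (p ^ d)) * ZMod.cast x.2.1 := by
      rw [ZMod.cast_mul h1, ZMod.cast_natCast h1]
    have hch : ((k + 1).choose 2 : ℕ) = k.choose 2 + k := by
      rw [Nat.choose_succ_succ, Nat.choose_one_right, add_comm]
    refine Prod.ext ?_ (Prod.ext ?_ ?_) <;> dsimp only
    · push_cast; ring
    · push_cast; ring
    · rw [hcast, hch]; push_cast; ring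

theorem choose_two_add (a b : ℕ) : (a + b).choose 2 = a.choose 2 + b.choose 2 + a * b := by
  induction b with
  | zero => simp
  | succ b ih =>
    have h1 : a + (b + 1) = (a + b) + 1 := rfl
    rw [h1, Nat.choose_succ_succ, Nat.choose_one_right, ih,
      Nat.choose_succ_succ b 1, Nat.choose_one_right]
    ring

theorem pow_dvd_choose_two {p : ℕ} (hodd : Odd p) {d e : ℕ} (hde : d ≤ e) :
    p ^ d ∣ (p ^ e).choose 2 := by
  have hpe : Odd (p ^ e) := hodd.pow
  obtain ⟨j, hj⟩ := hpe
  have h  : (p ^ e).choose 2 = p ^ e * j := by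
    rw [Nat.choose_two_right]
    have : p ^ e - 1 = 2 * j := by omega
    rw [this, Nat.mul_div_assoc _ ⟨j, rfl⟩, Nat.mul_div_cancel_left _ (by norm_num)]
  rw [h]
  exact (pow_dvd_pow p hde).mul_right j

theorem pow_card_one (hodd : Odd p) (hnm' : n ≤ m) (x : GCar p m n d) :
    letI := Ggroup p m n d hdn hdm
    x ^ p ^ m = 1 := by
  letI := Ggroup p m n d hdn hdm
  rw [pow_def p m n d hdn hdm, one_def p m n d hdn hdm]
  have h1 : ((p ^ m : ℕ) : ZMod (p ^ m)) = 0 := ZMod.natCast_self _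
  have h2 : ((p ^ m : ℕ) : ZMod (p ^ n)) = 0 :=
    (ZMod.natCast_eq_zero_iff _ _).mpr (pow_dvd_pow p hnm')
  have h3 : ((p ^ m : ℕ) : ZMod (p ^ d)) = 0 :=
    (ZMod.natCast_eq_zero_iff _ _).mpr (pow_dvd_pow p (hdn.trans hnm'))
  have h4 : (((p ^ m).choose 2 : ℕ) : ZMod (p ^ d)) = 0 :=
    (ZMod.natCast_eq_zero_iff _ _).mpr
      (pow_dvd_choose_two hodd (hdn.trans hnm'))
  rw [h1, h2, h3, h4]
  simp
  rfl

theorem pow_expB (hodd : Odd p) (B : GCar p m n d)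
    (hB : ((p : ZMod (p ^ m))) ^ n * B.1 = 0) :
    letI := Ggroup p m n d hdn hdm
    B ^ p ^ n = 1 := by
  letI := Ggroup p m n d hdn hdm
  rw [pow_def p m n d hdn hdm, one_def p m n d hdn hdm]
  have h1 : ((p ^ n : ℕ) : ZMod (p ^ m)) * B.1 = 0 := by
    rw [Nat.cast_pow]; exact hB
  have h2 : ((p ^ n : ℕ) : ZMod (p ^ n)) = 0 := ZMod.natCast_self _
  have h3 : ((p ^ n : ℕ) : ZMod (p ^ d)) = 0 :=
    (ZMod.natCast_eq_zero_iff _ _).mpr (pow_dvd_pow p hdn)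
  have h4 : (((p ^ n).choose 2 : ℕ) : ZMod (p ^ d)) = 0 :=
    (ZMod.natCast_eq_zero_iff _ _).mpr (pow_dvd_choose_two hodd hdn)
  rw [h1, h2, h3, h4]
  simp
  rfl

theorem mul_ctr (x : GCar p m n d) (s : ZMod (p ^ d)) :
    letI := Ggroup p m n d hdn hdm
    x * ctr p m n d s = (x.1, x.2.1, x.2.2 + s) := by
  letI := Ggroup p m n d hdn hdm
  rw [mul_def p m n d hdn hdm]
  refine Prod.ext ?_ (Prod.ext ?_ ?_) <;> simp [ctr]

theorem ctr_mul_ctr (s s' : ZMod (p ^ d)) :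
    letI := Ggroup p m n d hdn hdm
    ctr p m n d s * ctr p m n d s' = ctr p m n d (s + s') := by
  letI := Ggroup p m n d hdn hdm
  rw [mul_ctr p m n d hdn hdm]
  rfl

theorem ctr_pow (s : ZMod (p ^ d)) (k : ℕ) :
    letI := Ggroup p m n d hdn hdm
    ctr p m n d s ^ k = ctr p m n d ((k : ZMod (p ^ d)) * s) := by
  letI := Ggroup p m n d hdn hdm
  rw [pow_def p m n d hdn hdm]
  refine Prod.ext ?_ (Prod.ext ?_ ?_) <;> simp [ctr]

theorem ctr_inv (s : ZMod (p ^ d)) :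
    letI := Ggroup p m n d hdn hdm
    (ctr p m n d s)⁻¹ = ctr p m n d (-s) := by
  letI := Ggroup p m n d hdn hdm
  rw [inv_def p m n d hdn hdm]
  refine Prod.ext ?_ (Prod.ext ?_ ?_) <;> simp [ctr]

theorem ctr_ppd (s : ZMod (p ^ d)) :
    letI := Ggroup p m n d hdn hdm
    ctr p m n d s ^ p ^ d = 1 := by
  letI := Ggroup p m n d hdn hdm
  rw [ctr_pow p m n d hdn hdm, ZMod.natCast_self, zero_mul]
  rfl

theorem ABc (A B : GCar p m n d) (K L : ℕ) (S : ZMod (p ^ d)) :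
    letI := Ggroup p m n d hdn hdm
    A ^ K * B ^ L * ctr p m n d S =
      ((K : ZMod (p ^ m)) * A.1 + (L : ZMod (p ^ m)) * B.1,
       (K : ZMod (p ^ n)) * A.2.1 + (L : ZMod (p ^ n)) * B.2.1,
       ((K : ZMod (p ^ d)) * A.2.2 -
          ((K.choose 2 : ℕ) : ZMod (p ^ d)) *
            ((ZMod.cast A.2.1 : ZMod (p ^ d)) * ZMod.cast A.1)) +
        ((L : ZMod (p ^ d)) * B.2.2 -
          ((L.choose 2 : ℕ) : ZMod (p ^ d)) *
            ((ZMod.cast B.2.1 : ZMod (p ^ d)) * ZMod.cast B.1)) -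
        ((K : ZMod (p ^ d)) * (ZMod.cast A.2.1 : ZMod (p ^ d))) *
          ((L : ZMod (p ^ d)) * (ZMod.cast B.1 : ZMod (p ^ d))) + S) := by
  letI := Ggroup p m n d hdn hdm
  have h1 : (p : ℕ) ^ d ∣ p ^ n := pow_dvd_pow p hdn
  have h2 : (p : ℕ) ^ d ∣ p ^ m := pow_dvd_pow p hdm
  rw [pow_def p m n d hdn hdm, pow_def p m n d hdn hdm, mul_ctr p m n d hdn hdm]
  erw [mul_def p m n d hdn hdm]
  refine Prod.ext ?_ (Prod.ext ?_ ?_) <;> dsimp only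
  rw [ZMod.cast_mul h1, ZMod.cast_natCast h1, ZMod.cast_mul h2, ZMod.cast_natCast h2]

theorem hom_core (A B : GCar p m n d) (k l j k' l' j' : ℕ) :
    letI := Ggroup p m n d hdn hdm
    A ^ k * A ^ k' * (B ^ l * B ^ l') *
        (ctr p m n d (tt p m n d A B) ^ j * ctr p m n d (tt p m n d A B) ^ j' *
          (ctr p m n d (tt p m n d A B) ^ (l * k'))⁻¹) =
      (A ^ k * B ^ l * ctr p m n d (tt p m n d A B) ^ j) *
        (A ^ k' * B ^ l' * ctr p m n d (tt p m n d A B) ^ j') := by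
  letI := Ggroup p m n d hdn hdm
  have h1 : (p : ℕ) ^ d ∣ p ^ n := pow_dvd_pow p hdn
  have h2 : (p : ℕ) ^ d ∣ p ^ m := pow_dvd_pow p hdm
  rw [← pow_add, ← pow_add]
  simp only [ctr_pow p m n d hdn hdm]
  rw [ctr_inv p m n d hdn hdm, ctr_mul_ctr p m n d hdn hdm, ctr_mul_ctr p m n d hdn hdm]
  simp only [ABc p m n d hdn hdm]
  erw [mul_def p m n d hdn hdm]
  refine Prod.ext ?_ (Prod.ext ?_ ?_) <;> dsimp only
  · push_cast; ring
  · push_cast; ring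
  · rw [ZMod.cast_add h1, ZMod.cast_mul h1, ZMod.cast_natCast h1,
      ZMod.cast_mul h1, ZMod.cast_natCast h1, ZMod.cast_add h2, ZMod.cast_mul h2,
      ZMod.cast_natCast h2, ZMod.cast_mul h2, ZMod.cast_natCast h2,
      choose_two_add, choose_two_add]
    simp only [tt]
    push_cast
    ring

/-- The candidate endomorphism determined by images `A` of `a` and `B` of `b`. -/
def Fmap (A B x : GCar p m n d) : GCar p m n d :=
  letI := Ggroup p m n d hdn hdm
  A ^ x.1.val * B ^ x.2.1.val * ctr p m n d (tt p m n d A B) ^ x.2.2.val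

theorem Fmap_mul (hp : p.Prime) (hodd : Odd p) (hnm' : n ≤ m) (A B : GCar p m n d)
    (hB : ((p : ZMod (p ^ m))) ^ n * B.1 = 0) (x y : GCar p m n d) :
    letI := Ggroup p m n d hdn hdm
    Fmap p m n d hdn hdm A B (x * y) =
      Fmap p m n d hdn hdm A B x * Fmap p m n d hdn hdm A B y := by
  letI := Ggroup p m n d hdn hdm
  haveI : NeZero (p ^ m) := ⟨(pow_pos hp.pos m).ne'⟩
  haveI : NeZero (p ^ n) := ⟨(pow_pos hp.pos n).ne'⟩
  haveI : NeZero (p ^ d) := ⟨(pow_pos hp.pos d).ne'⟩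
  have hA : A ^ p ^ m = 1 := pow_card_one p m n d hdn hdm hodd hnm' A
  have hBo : B ^ p ^ n = 1 := pow_expB p m n d hdn hdm hodd B hB
  have hC : ctr p m n d (tt p m n d A B) ^ p ^ d = 1 := ctr_ppd p m n d hdn hdm _
  show A ^ (x * y).1.val * B ^ (x * y).2.1.val *
      ctr p m n d (tt p m n d A B) ^ (x * y).2.2.val = _
  rw [mul_def p m n d hdn hdm x y]
  dsimp only
  rw [powVal_add hA, powVal_add hBo, powVal_sub hC, powVal_add hC]
  have e1 : ctr p m n d (tt p m n d A B) ^
      ((ZMod.cast x.2.1 : ZMod (p ^ d)) * ZMod.cast y.1).val =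
      ctr p m n d (tt p m n d A B) ^ (x.2.1.val * y.1.val) := by
    rw [powVal_mul hC]
    have hx : (ZMod.cast x.2.1 : ZMod (p ^ d)) = ((x.2.1.val : ℕ) : ZMod (p ^ d)) :=
      (ZMod.natCast_val _).symm
    have hy : (ZMod.cast y.1 : ZMod (p ^ d)) = ((y.1.val : ℕ) : ZMod (p ^ d)) :=
      (ZMod.natCast_val _).symm
    rw [hx, powVal_natCast hC]
    have hC2 : (ctr p m n d (tt p m n d A B) ^ x.2.1.val) ^ p ^ d = 1 := by
      rw [← pow_mul, mul_comm, pow_mul, hC, one_pow]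
    rw [hy, powVal_natCast hC2, ← pow_mul]
  rw [e1]
  exact hom_core p m n d hdn hdm A B x.1.val x.2.1.val x.2.2.val y.1.val y.2.1.val y.2.2.val

theorem exists_rep {p : ℕ} (hp : p.Prime) {e f : ℕ} (hfe : f ≤ e) (v : ZMod (p ^ e))
    (hv : (p : ZMod (p ^ e)) ^ f * v = 0) :
    ∃ w : ZMod (p ^ e), v = (p : ZMod (p ^ e)) ^ (e - f) * w := by
  haveI : NeZero (p ^ e) := ⟨(pow_pos hp.pos e).ne'⟩
  have h1 : ((p ^ f * v.val : ℕ) : ZMod (p ^ e)) = 0 := by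
    push_cast [ZMod.natCast_val, ZMod.cast_id]
    exact hv
  have h2 : p ^ e ∣ p ^ f * v.val := (ZMod.natCast_eq_zero_iff _ _).mp h1
  have h3 : p ^ (e - f) ∣ v.val := by
    have h4 : p ^ f * p ^ (e - f) ∣ p ^ f * v.val := by
      rw [← pow_add, show f + (e - f) = e by omega]
      exact h2
    exact (mul_dvd_mul_iff_left (pow_ne_zero f hp.pos.ne')).mp h4
  obtain ⟨w, hw⟩ := h3
  refine ⟨(w : ZMod (p ^ e)), ?_⟩
  have h5 : v = ((v.val : ℕ) : ZMod (p ^ e)) := by rw [ZMod.natCast_val, ZMod.cast_id]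
  rw [h5, hw]
  push_cast
  ring

theorem isNilpotent_p {p e : ℕ} : IsNilpotent (p : ZMod (p ^ e)) :=
  ⟨e, by rw [← Nat.cast_pow, ZMod.natCast_self]⟩

theorem isUnit_of_isUnit_cast {p e : ℕ} (hp : p.Prime) (he0 : e ≠ 0) {u : ZMod (p ^ e)}
    (h : IsUnit (ZMod.castHom (dvd_pow_self p he0) (ZMod p) u)) :
    IsUnit u := by
  haveI : NeZero (p ^ e) := ⟨(pow_pos hp.pos e).ne'⟩
  have hu : u = ((u.val : ℕ) : ZMod (p ^ e)) := by rw [ZMod.natCast_val, ZMod.cast_id]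
  rw [hu, ZMod.isUnit_iff_coprime]
  have h2 : ZMod.castHom (dvd_pow_self p he0) (ZMod p) u =
      ((u.val : ℕ) : ZMod p) := by
    rw [ZMod.castHom_apply, ZMod.natCast_val]
  rw [h2, ZMod.isUnit_iff_coprime] at h
  exact Nat.Coprime.pow_right e h

theorem unit_sub_nilpotent {R : Type*} [CommRing R] {u r : R} (hu : IsUnit u)
    (hr : IsNilpotent r) : IsUnit (u - r) := by
  have := hr.neg.isUnit_add_right_of_commute hu (Commute.all _ _)
  rwa [neg_add_eq_sub] at this

theorem nil_mul {R : Type*} [CommRing R] {a : R} (h : IsNilpotent a) (b : R) :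
    IsNilpotent (a * b) :=
  (Commute.all a b).isNilpotent_mul_right h

include hdn hdm in
theorem tt_isUnit (hp : p.Prime) (hnm : n < m) (A B : GCar p m n d)
    (hUA : IsUnit A.1) (hUB : IsUnit B.2.1) (hB : ((p : ZMod (p ^ m))) ^ n * B.1 = 0) :
    IsUnit (tt p m n d A B) := by
  obtain ⟨w, hw⟩ := exists_rep hp hnm.le B.1 hB
  have hcm : (ZMod.cast A.1 : ZMod (p ^ d)) = ZMod.castHom (pow_dvd_pow p hdm) (ZMod (p ^ d)) A.1 :=
    (ZMod.castHom_apply _).symm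
  have hcn : (ZMod.cast B.2.1 : ZMod (p ^ d)) =
      ZMod.castHom (pow_dvd_pow p hdn) (ZMod (p ^ d)) B.2.1 := (ZMod.castHom_apply _).symm
  have hcm2 : (ZMod.cast A.2.1 : ZMod (p ^ d)) =
      ZMod.castHom (pow_dvd_pow p hdn) (ZMod (p ^ d)) A.2.1 := (ZMod.castHom_apply _).symm
  have hcb1 : (ZMod.cast B.1 : ZMod (p ^ d)) =
      ZMod.castHom (pow_dvd_pow p hdm) (ZMod (p ^ d)) B.1 := (ZMod.castHom_apply _).symm
  unfold tt
  apply unit_sub_nilpotent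
  · rw [hcn, hcm]
    exact (hUB.map _).mul (hUA.map _)
  · rw [hcb1, hw, map_mul, map_pow, map_natCast]
    have h1 : IsNilpotent ((p : ZMod (p ^ d)) ^ (m - n)) := by
      rw [show m - n = (m - n - 1) + 1 by omega, pow_succ, mul_comm]
      exact nil_mul isNilpotent_p _
    rw [show (ZMod.cast A.2.1 : ZMod (p ^ d)) *
        ((p : ZMod (p ^ d)) ^ (m - n) * (ZMod.castHom (pow_dvd_pow p hdm) (ZMod (p ^ d))) w) =
        (p : ZMod (p ^ d)) ^ (m - n) *
        ((ZMod.cast A.2.1 : ZMod (p ^ d)) * (ZMod.castHom (pow_dvd_pow p hdm) (ZMod (p ^ d))) w)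
      from by ring]
    exact nil_mul h1 _

theorem Fmap_eq_one (hp : p.Prime) (hnm : n < m) (A B : GCar p m n d)
    (hUA : IsUnit A.1) (hUB : IsUnit B.2.1) (hB : ((p : ZMod (p ^ m))) ^ n * B.1 = 0)
    (x : GCar p m n d)
    (hx : Fmap p m n d hdn hdm A B x =
      ((0, 0, 0) : ZMod (p ^ m) × ZMod (p ^ n) × ZMod (p ^ d))) :
    x = ((0, 0, 0) : ZMod (p ^ m) × ZMod (p ^ n) × ZMod (p ^ d)) := by
  letI := Ggroup p m n d hdn hdm
  haveI : NeZero (p ^ m) := ⟨(pow_pos hp.pos m).ne'⟩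
  haveI : NeZero (p ^ n) := ⟨(pow_pos hp.pos n).ne'⟩
  haveI : NeZero (p ^ d) := ⟨(pow_pos hp.pos d).ne'⟩
  unfold Fmap at hx
  rw [ctr_pow p m n d hdn hdm, ABc p m n d hdn hdm] at hx; erw [Prod.mk.injEq, Prod.mk.injEq] at hx
  obtain ⟨E1, E2, E3⟩ := hx
  -- notation
  obtain ⟨w, hw⟩ := exists_rep hp hnm.le B.1 hB
  set k := x.1.val with hkdef
  set l := x.2.1.val with hldef
  have hkm : ((k : ℕ) : ZMod (p ^ m)) = x.1 := by rw [hkdef, ZMod.natCast_val, ZMod.cast_id]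
  have hln : ((l : ℕ) : ZMod (p ^ n)) = x.2.1 := by rw [hldef, ZMod.natCast_val, ZMod.cast_id]
  -- step 1 : x.2.1 = 0
  set π := ZMod.castHom (pow_dvd_pow p hnm.le) (ZMod (p ^ n)) with hπ
  have E1' : ((k : ℕ) : ZMod (p ^ n)) * π A.1 + x.2.1 * π B.1 = 0 := by
    have := congrArg π E1
    rw [map_add, map_mul, map_mul, map_natCast, map_natCast, map_zero, hln] at this
    exact this
  have hx21 : x.2.1 = 0 := by
    have hu : IsUnit (B.2.1 * π A.1 - π B.1 * A.2.1) := by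
      apply unit_sub_nilpotent (hUB.mul (hUA.map π))
      rw [hw, map_mul, map_pow, map_natCast,
        show m - n = (m - n - 1) + 1 by omega, pow_succ]
      rw [show (p : ZMod (p ^ n)) ^ (m - n - 1) * (p : ZMod (p ^ n)) * π w * A.2.1 =
        (p : ZMod (p ^ n)) * ((p : ZMod (p ^ n)) ^ (m - n - 1) * π w * A.2.1) from by ring]
      exact nil_mul isNilpotent_p _
    have key : x.2.1 * (B.2.1 * π A.1 - π B.1 * A.2.1) = 0 := by
      have h1 := congrArg (· * A.2.1) E1'
      have h2 := congrArg (· * π A.1) E2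
      simp only [add_mul, zero_mul] at h1 h2
      rw [hln] at h2
      linear_combination h2 - h1
    exact (hu.mul_left_eq_zero).mp key
  -- step 2 : x.1 = 0
  have hx1 : x.1 = 0 := by
    have hl0 : (l : ℕ) = 0 := by rw [hldef, hx21, ZMod.val_zero]
    rw [hl0, Nat.cast_zero, zero_mul, add_zero, hkm] at E1
    exact (hUA.mul_right_eq_zero).mp (by rwa [mul_comm] at E1)
  -- step 3 : x.2.2 = 0
  have hk0 : (k : ℕ) = 0 := by rw [hkdef, hx1, ZMod.val_zero]
  have hl0 : (l : ℕ) = 0 := by rw [hldef, hx21, ZMod.val_zero]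
  have hx22 : x.2.2 = 0 := by
    rw [hk0, hl0] at E3
    norm_num at E3
    have htu := tt_isUnit p m n d hdn hdm hp hnm A B hUA hUB hB
    exact (htu.mul_left_eq_zero).mp E3
  exact Prod.ext hx1 (Prod.ext hx21 hx22)

def aG : GCar p m n d := ((1 : ZMod (p ^ m)), (0 : ZMod (p ^ n)), (0 : ZMod (p ^ d)))
def bG : GCar p m n d := ((0 : ZMod (p ^ m)), (1 : ZMod (p ^ n)), (0 : ZMod (p ^ d)))
def cG : GCar p m n d := ((0 : ZMod (p ^ m)), (0 : ZMod (p ^ n)), (1 : ZMod (p ^ d)))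

theorem decomp (hp : p.Prime) (x : GCar p m n d) :
    letI := Ggroup p m n d hdn hdm
    x = aG p m n d ^ x.1.val * bG p m n d ^ x.2.1.val * cG p m n d ^ x.2.2.val := by
  letI := Ggroup p m n d hdn hdm
  haveI : NeZero (p ^ m) := ⟨(pow_pos hp.pos m).ne'⟩
  haveI : NeZero (p ^ n) := ⟨(pow_pos hp.pos n).ne'⟩
  haveI : NeZero (p ^ d) := ⟨(pow_pos hp.pos d).ne'⟩
  rw [pow_def p m n d hdn hdm, pow_def p m n d hdn hdm, pow_def p m n d hdn hdm]
  erw [mul_def p m n d hdn hdm, mul_def p m n d hdn hdm]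
  refine Prod.ext ?_ (Prod.ext ?_ ?_) <;> dsimp only [aG, bG, cG] <;>
    simp [ZMod.natCast_val, ZMod.cast_id]

theorem c_comm (A B : GCar p m n d) :
    letI := Ggroup p m n d hdn hdm
    A⁻¹ * (B⁻¹ * (A * B)) = ctr p m n d (tt p m n d A B) := by
  letI := Ggroup p m n d hdn hdm
  have h1 : (p : ℕ) ^ d ∣ p ^ n := pow_dvd_pow p hdn
  have h2 : (p : ℕ) ^ d ∣ p ^ m := pow_dvd_pow p hdm
  erw [mul_def p m n d hdn hdm, mul_def p m n d hdn hdm, mul_def p m n d hdn hdm]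
  refine Prod.ext ?_ (Prod.ext ?_ ?_) <;>
    simp [mul_def p m n d hdn hdm, inv_def p m n d hdn hdm, ctr, tt,
      ZMod.cast_add h1, ZMod.cast_add h2, ZMod.cast_neg h1, ZMod.cast_neg h2] <;> ring

theorem c_eq (hp : p.Prime) :
    letI := Ggroup p m n d hdn hdm
    cG p m n d = (aG p m n d)⁻¹ * ((bG p m n d)⁻¹ * (aG p m n d * bG p m n d)) := by
  letI := Ggroup p m n d hdn hdm
  haveI : NeZero (p ^ d) := ⟨(pow_pos hp.pos d).ne'⟩
  have h1 : (p : ℕ) ^ d ∣ p ^ n := pow_dvd_pow p hdn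
  have h2 : (p : ℕ) ^ d ∣ p ^ m := pow_dvd_pow p hdm
  rw [c_comm p m n d hdn hdm]
  unfold cG ctr tt aG bG
  dsimp only
  rw [ZMod.cast_one h1, ZMod.cast_one h2, ZMod.cast_zero, ZMod.cast_zero]
  ring_nf
  rfl

theorem Fmap_a (hp : p.Prime) (hm : 1 ≤ m) (A B : GCar p m n d) :
    Fmap p m n d hdn hdm A B (aG p m n d) = A := by
  letI := Ggroup p m n d hdn hdm
  haveI : NeZero (p ^ n) := ⟨(pow_pos hp.pos n).ne'⟩
  haveI : NeZero (p ^ d) := ⟨(pow_pos hp.pos d).ne'⟩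
  haveI : Fact (1 < p ^ m) := ⟨Nat.one_lt_pow (by omega) hp.one_lt⟩
  unfold Fmap aG
  dsimp only
  rw [ZMod.val_one, ZMod.val_zero, ZMod.val_zero, pow_one, pow_zero, pow_zero,
    mul_one, mul_one]

theorem Fmap_b (hp : p.Prime) (hn : 1 ≤ n) (A B : GCar p m n d) :
    Fmap p m n d hdn hdm A B (bG p m n d) = B := by
  letI := Ggroup p m n d hdn hdm
  haveI : NeZero (p ^ m) := ⟨(pow_pos hp.pos m).ne'⟩
  haveI : NeZero (p ^ d) := ⟨(pow_pos hp.pos d).ne'⟩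
  haveI : Fact (1 < p ^ n) := ⟨Nat.one_lt_pow (by omega) hp.one_lt⟩
  unfold Fmap bG
  dsimp only
  rw [ZMod.val_one, ZMod.val_zero, ZMod.val_zero, pow_one, pow_zero, pow_zero,
    one_mul, mul_one]

theorem Fmap_one (hp : p.Prime) (A B : GCar p m n d) :
    letI := Ggroup p m n d hdn hdm
    Fmap p m n d hdn hdm A B (1 : GCar p m n d) = 1 := by
  letI := Ggroup p m n d hdn hdm
  haveI : NeZero (p ^ m) := ⟨(pow_pos hp.pos m).ne'⟩
  haveI : NeZero (p ^ n) := ⟨(pow_pos hp.pos n).ne'⟩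
  haveI : NeZero (p ^ d) := ⟨(pow_pos hp.pos d).ne'⟩
  show Fmap p m n d hdn hdm A B
    ((0, 0, 0) : ZMod (p ^ m) × ZMod (p ^ n) × ZMod (p ^ d)) = 1
  unfold Fmap
  dsimp only
  rw [ZMod.val_zero, ZMod.val_zero, ZMod.val_zero, pow_zero, pow_zero, pow_zero,
    mul_one, mul_one]

theorem aut_apply (hp : p.Prime) :
    letI := Ggroup p m n d hdn hdm
    ∀ (φ : MulAut (GCar p m n d)) (x : GCar p m n d),
    φ x = Fmap p m n d hdn hdm (φ (aG p m n d)) (φ (bG p m n d)) x := by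
  letI := Ggroup p m n d hdn hdm
  intro φ x
  have hc : φ (cG p m n d) =
      ctr p m n d (tt p m n d (φ (aG p m n d)) (φ (bG p m n d))) := by
    rw [c_eq p m n d hdn hdm hp, map_mul, map_mul, map_mul, map_inv, map_inv]
    exact c_comm p m n d hdn hdm _ _
  conv_lhs => rw [decomp p m n d hdn hdm hp x]
  rw [map_mul, map_mul, map_pow, map_pow, map_pow, hc]
  rfl

theorem Fmap_fst (A B x : GCar p m n d) :
    (Fmap p m n d hdn hdm A B x).1 =
      ((x.1.val : ℕ) : ZMod (p ^ m)) * A.1 + ((x.2.1.val : ℕ) : ZMod (p ^ m)) * B.1 := by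
  letI := Ggroup p m n d hdn hdm
  unfold Fmap
  rw [ctr_pow p m n d hdn hdm, ABc p m n d hdn hdm]

theorem Fmap_snd (A B x : GCar p m n d) :
    (Fmap p m n d hdn hdm A B x).2.1 =
      ((x.1.val : ℕ) : ZMod (p ^ n)) * A.2.1 + ((x.2.1.val : ℕ) : ZMod (p ^ n)) * B.2.1 := by
  letI := Ggroup p m n d hdn hdm
  unfold Fmap
  rw [ctr_pow p m n d hdn hdm, ABc p m n d hdn hdm]

def Fhom (hp : p.Prime) (hodd : Odd p) (hnm : n < m) (A B : GCar p m n d)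
    (hB : (p : ZMod (p ^ m)) ^ n * B.1 = 0) :
    letI := Ggroup p m n d hdn hdm
    GCar p m n d →* GCar p m n d :=
  letI := Ggroup p m n d hdn hdm
  { toFun := Fmap p m n d hdn hdm A B
    map_one' := Fmap_one p m n d hdn hdm hp A B
    map_mul' := Fmap_mul p m n d hdn hdm hp hodd hnm.le A B hB }

theorem Fhom_bijective (hp : p.Prime) (hodd : Odd p) (hnm : n < m) (A B : GCar p m n d)
    (hUA : IsUnit A.1) (hB : (p : ZMod (p ^ m)) ^ n * B.1 = 0) (hUB : IsUnit B.2.1) :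
    letI := Ggroup p m n d hdn hdm
    Function.Bijective (Fhom p m n d hdn hdm hp hodd hnm A B hB) := by
  letI := Ggroup p m n d hdn hdm
  haveI : NeZero (p ^ m) := ⟨(pow_pos hp.pos m).ne'⟩
  haveI : NeZero (p ^ n) := ⟨(pow_pos hp.pos n).ne'⟩
  haveI : NeZero (p ^ d) := ⟨(pow_pos hp.pos d).ne'⟩
  haveI : Finite (GCar p m n d) :=
    inferInstanceAs (Finite (ZMod (p ^ m) × ZMod (p ^ n) × ZMod (p ^ d)))
  rw [← Finite.injective_iff_bijective]
  apply (injective_iff_map_eq_one (Fhom p m n d hdn hdm hp hodd hnm A B hB)).mpr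
  intro a ha
  exact Fmap_eq_one p m n d hdn hdm hp hnm A B hUA hUB hB a ha

noncomputable def FAut (hp : p.Prime) (hodd : Odd p) (hnm : n < m) (A B : GCar p m n d)
    (hUA : IsUnit A.1) (hB : (p : ZMod (p ^ m)) ^ n * B.1 = 0) (hUB : IsUnit B.2.1) :
    letI := Ggroup p m n d hdn hdm
    MulAut (GCar p m n d) :=
  letI := Ggroup p m n d hdn hdm
  MulEquiv.ofBijective (Fhom p m n d hdn hdm hp hodd hnm A B hB)
    (Fhom_bijective p m n d hdn hdm hp hodd hnm A B hUA hB hUB)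

theorem FAut_apply (hp : p.Prime) (hodd : Odd p) (hnm : n < m) (A B : GCar p m n d)
    (hUA : IsUnit A.1) (hB : (p : ZMod (p ^ m)) ^ n * B.1 = 0) (hUB : IsUnit B.2.1)
    (x : GCar p m n d) :
    FAut p m n d hdn hdm hp hodd hnm A B hUA hB hUB x = Fmap p m n d hdn hdm A B x := rfl

end GAux

section Counting

def subtypeFst {α β γ : Type*} {P : α → Prop} : {x : α × β × γ // P x.1} ≃ {a // P a} × β × γ where
  toFun x := (⟨x.1.1, x.2⟩, x.1.2.1, x.1.2.2)
  invFun y := ⟨(y.1.1, y.2.1, y.2.2), y.1.2⟩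
  left_inv := by rintro ⟨⟨a, b, c⟩, h⟩; rfl
  right_inv := by rintro ⟨⟨a, h⟩, b, c⟩; rfl

def subtypeTwo {α β γ : Type*} {P : α → Prop} {Q : β → Prop} :
    {x : α × β × γ // P x.1 ∧ Q x.2.1} ≃ {a // P a} × {b // Q b} × γ where
  toFun x := (⟨x.1.1, x.2.1⟩, ⟨x.1.2.1, x.2.2⟩, x.1.2.2)
  invFun y := ⟨(y.1.1, y.2.1.1, y.2.2), y.1.2, y.2.1.2⟩
  left_inv := by rintro ⟨⟨a, b, c⟩, h1, h2⟩; rfl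
  right_inv := by rintro ⟨⟨a, h1⟩, ⟨b, h2⟩, c⟩; rfl

noncomputable def unitsEquivSubtype (R : Type*) [Monoid R] : Rˣ ≃ {a : R // IsUnit a} where
  toFun u := ⟨(u : R), u.isUnit⟩
  invFun a := a.2.unit
  left_inv u := Units.ext u.isUnit.unit_spec
  right_inv a := Subtype.ext a.2.unit_spec

theorem card_units_subtype {p : ℕ} (hp : p.Prime) (e : ℕ) (he : 1 ≤ e) :
    Nat.card {a : ZMod (p ^ e) // IsUnit a} = p ^ (e - 1) * (p - 1) := by
  haveI : NeZero (p ^ e) := ⟨(pow_pos hp.pos e).ne'⟩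
  rw [Nat.card_congr (unitsEquivSubtype (ZMod (p ^ e))).symm, Nat.card_eq_fintype_card,
    ZMod.card_units_eq_totient, Nat.totient_prime_pow hp (by omega)]

theorem val_dvd_of_ann {p : ℕ} (hp : p.Prime) {e f : ℕ} (hfe : f ≤ e) (v : ZMod (p ^ e))
    (hv : (p : ZMod (p ^ e)) ^ f * v = 0) : p ^ (e - f) ∣ v.val := by
  haveI : NeZero (p ^ e) := ⟨(pow_pos hp.pos e).ne'⟩
  have h1 : ((p ^ f * v.val : ℕ) : ZMod (p ^ e)) = 0 := by
    push_cast [ZMod.natCast_val, ZMod.cast_id]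
    exact hv
  have h2 : p ^ e ∣ p ^ f * v.val := (ZMod.natCast_eq_zero_iff _ _).mp h1
  have h4 : p ^ f * p ^ (e - f) ∣ p ^ f * v.val := by
    rw [← pow_add, show f + (e - f) = e by omega]
    exact h2
  exact (mul_dvd_mul_iff_left (pow_ne_zero f hp.pos.ne')).mp h4

theorem card_ann {p : ℕ} (hp : p.Prime) {e f : ℕ} (hfe : f ≤ e) :
    Nat.card {v : ZMod (p ^ e) // (p : ZMod (p ^ e)) ^ f * v = 0} = p ^ f := by
  haveI : NeZero (p ^ e) := ⟨(pow_pos hp.pos e).ne'⟩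
  haveI : NeZero (p ^ f) := ⟨(pow_pos hp.pos f).ne'⟩
  have hpow : (p : ℕ) ^ f * p ^ (e - f) = p ^ e := by
    rw [← pow_add]; congr 1; omega
  let E : ZMod (p ^ f) ≃ {v : ZMod (p ^ e) // (p : ZMod (p ^ e)) ^ f * v = 0} :=
    { toFun := fun z => ⟨((p ^ (e - f) * z.val : ℕ) : ZMod (p ^ e)), by
        rw [show ((p : ZMod (p ^ e))) ^ f = ((p ^ f : ℕ) : ZMod (p ^ e)) from by push_cast; rfl,
          ← Nat.cast_mul, ZMod.natCast_eq_zero_iff]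
        exact ⟨z.val, by rw [← mul_assoc, hpow]⟩⟩
      invFun := fun v => ((v.1.val / p ^ (e - f) : ℕ) : ZMod (p ^ f))
      left_inv := fun z => by
        have hzlt : z.val < p ^ f := z.val_lt
        have hlt : p ^ (e - f) * z.val < p ^ e := by
          calc p ^ (e - f) * z.val < p ^ (e - f) * p ^ f :=
                (Nat.mul_lt_mul_left (pow_pos hp.pos _)).mpr hzlt
            _ = p ^ e := by rw [mul_comm]; exact hpow
        show (((((p ^ (e - f) * z.val : ℕ) : ZMod (p ^ e))).val / p ^ (e - f) : ℕ) :
          ZMod (p ^ f)) = z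
        rw [ZMod.val_natCast_of_lt hlt, Nat.mul_div_cancel_left _ (pow_pos hp.pos _),
          ZMod.natCast_val, ZMod.cast_id]
      right_inv := fun v => by
        obtain ⟨q, hq⟩ := val_dvd_of_ann hp hfe v.1 v.2
        have hqlt : q < p ^ f := by
          have hvlt : v.1.val < p ^ e := v.1.val_lt
          rw [hq, ← hpow, mul_comm (p ^ f)] at hvlt
          exact Nat.lt_of_mul_lt_mul_left hvlt
        apply Subtype.ext
        show ((p ^ (e - f) * (((v.1.val / p ^ (e - f) : ℕ) : ZMod (p ^ f))).val : ℕ) :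
          ZMod (p ^ e)) = v.1
        rw [hq, Nat.mul_div_cancel_left _ (pow_pos hp.pos _), ZMod.val_natCast_of_lt hqlt,
          ← hq, ZMod.natCast_val, ZMod.cast_id] }
  rw [Nat.card_congr E.symm, Nat.card_zmod]

end Counting

/-- For an odd prime `p` and `1 ≤ d ≤ n < m`, the automorphism group of
`G = G(p^m, p^n, p^d)` has order `p^(2d+3n+m-2)·(p-1)²`. -/
theorem card_aut_G_of_lt (p m n d : ℕ) (hp : p.Prime) (hodd : Odd p)
    (hd : 1 ≤ d) (hdn : d ≤ n) (hnm : n < m) :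
    letI : Group (GCar p m n d) := Ggroup p m n d hdn (hdn.trans hnm.le)
    Nat.card (MulAut (GCar p m n d)) =
      p ^ (2 * d + 3 * n + m - 2) * (p - 1) ^ 2 := by
  letI := Ggroup p m n d hdn (hdn.trans hnm.le)
  have hdm : d ≤ m := hdn.trans hnm.le
  haveI : NeZero (p ^ m) := ⟨(pow_pos hp.pos m).ne'⟩
  haveI : NeZero (p ^ n) := ⟨(pow_pos hp.pos n).ne'⟩
  haveI : NeZero (p ^ d) := ⟨(pow_pos hp.pos d).ne'⟩
  have hm1 : 1 ≤ m := by omega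
  have hn1 : 1 ≤ n := by omega
  have hm0 : m ≠ 0 := by omega
  have hn0 : n ≠ 0 := by omega
  have hcond : ∀ φ : MulAut (GCar p m n d),
      IsUnit (φ (GAux.aG p m n d)).1 ∧
        ((p : ZMod (p ^ m)) ^ n * (φ (GAux.bG p m n d)).1 = 0 ∧
          IsUnit (φ (GAux.bG p m n d)).2.1) := by
    intro φ
    set A := φ (GAux.aG p m n d) with hA
    set B := φ (GAux.bG p m n d) with hB
    have hb1 : (p : ZMod (p ^ m)) ^ n * (GAux.bG p m n d).1 = 0 := mul_zero _
    have hbord := GAux.pow_expB p m n d hdn hdm hodd (GAux.bG p m n d) hb1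
    have hφb : B ^ p ^ n = 1 := by rw [hB, ← map_pow, hbord, map_one]
    have c2 : (p : ZMod (p ^ m)) ^ n * B.1 = 0 := by
      have h := (GAux.pow_def p m n d hdn hdm B (p ^ n)).symm.trans hφb
      have h1 := congrArg Prod.fst h
      dsimp only at h1
      rw [show ((1 : GCar p m n d)).1 = (0 : ZMod (p ^ m)) from rfl] at h1
      rw [show ((p : ZMod (p ^ m))) ^ n = ((p ^ n : ℕ) : ZMod (p ^ m)) from by push_cast; rfl]
      exact h1
    obtain ⟨w, hw⟩ := GAux.exists_rep hp hnm.le B.1 c2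
    set ρ := ZMod.castHom (dvd_pow_self p hm0) (ZMod p) with hρdef
    have hρB1 : ρ B.1 = 0 := by
      rw [hw, map_mul, map_pow, map_natCast, ZMod.natCast_self,
        zero_pow (show m - n ≠ 0 by omega), zero_mul]
    have hxa : GAux.Fmap p m n d hdn hdm A B (φ.symm (GAux.aG p m n d)) =
        GAux.aG p m n d := by
      rw [hA, hB, ← GAux.aut_apply p m n d hdn hdm hp φ _, MulEquiv.apply_symm_apply]
    have E1 := congrArg Prod.fst hxa
    rw [GAux.Fmap_fst p m n d hdn hdm] at E1
    have E1' := congrArg ρ E1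
    rw [map_add, map_mul, map_mul, map_natCast, map_natCast, hρB1, mul_zero, add_zero,
      show ρ (GAux.aG p m n d).1 = 1 from by
        rw [show (GAux.aG p m n d).1 = 1 from rfl, map_one]] at E1'
    have hUρA : IsUnit (ρ A.1) := IsUnit.of_mul_eq_one (a := ρ A.1)
      (((φ.symm (GAux.aG p m n d)).1.val : ZMod p)) (by linear_combination E1')
    have c1 : IsUnit A.1 := GAux.isUnit_of_isUnit_cast hp hm0 hUρA
    have hxb : GAux.Fmap p m n d hdn hdm A B (φ.symm (GAux.bG p m n d)) =
        GAux.bG p m n d := by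
      rw [hA, hB, ← GAux.aut_apply p m n d hdn hdm hp φ _, MulEquiv.apply_symm_apply]
    have F1 := congrArg Prod.fst hxb
    rw [GAux.Fmap_fst p m n d hdn hdm] at F1
    have F2 := congrArg (fun z : GCar p m n d => z.2.1) hxb
    rw [GAux.Fmap_snd p m n d hdn hdm] at F2
    have F1' := congrArg ρ F1
    rw [map_add, map_mul, map_mul, map_natCast, map_natCast, hρB1, mul_zero, add_zero,
      show ρ (GAux.bG p m n d).1 = 0 from by
        rw [show (GAux.bG p m n d).1 = 0 from rfl, map_zero]] at F1'
    have hk0 : (((φ.symm (GAux.bG p m n d)).1.val : ℕ) : ZMod p) = 0 :=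
      (hUρA.mul_left_eq_zero).mp F1'
    set ρ' := ZMod.castHom (dvd_pow_self p hn0) (ZMod p) with hρ'def
    have F2' := congrArg ρ' F2
    rw [map_add, map_mul, map_mul, map_natCast, map_natCast, hk0, zero_mul, zero_add,
      show ρ' (GAux.bG p m n d).2.1 = 1 from by
        rw [show (GAux.bG p m n d).2.1 = 1 from rfl, map_one]] at F2'
    have c3 : IsUnit B.2.1 := GAux.isUnit_of_isUnit_cast hp hn0
      (IsUnit.of_mul_eq_one (a := ρ' B.2.1)
        (((φ.symm (GAux.bG p m n d)).2.1.val : ZMod p)) (by linear_combination F2'))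
    exact ⟨c1, c2, c3⟩
  let S := {AB : (ZMod (p ^ m) × ZMod (p ^ n) × ZMod (p ^ d)) ×
      (ZMod (p ^ m) × ZMod (p ^ n) × ZMod (p ^ d)) //
      IsUnit AB.1.1 ∧ ((p : ZMod (p ^ m)) ^ n * AB.2.1 = 0 ∧ IsUnit AB.2.2.1)}
  let e1 : MulAut (GCar p m n d) ≃ S :=
    { toFun := fun φ => ⟨(φ (GAux.aG p m n d), φ (GAux.bG p m n d)),
        (hcond φ).1, (hcond φ).2.1, (hcond φ).2.2⟩
      invFun := fun s => GAux.FAut p m n d hdn hdm hp hodd hnm s.1.1 s.1.2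
        s.2.1 s.2.2.1 s.2.2.2
      left_inv := fun φ => by
        apply MulEquiv.ext
        intro x
        rw [GAux.FAut_apply]
        exact (GAux.aut_apply p m n d hdn hdm hp φ x).symm
      right_inv := fun s => by
        apply Subtype.ext
        dsimp only
        apply Prod.ext
        · erw [GAux.FAut_apply]
          exact GAux.Fmap_a p m n d hdn hdm hp hm1 _ _
        · erw [GAux.FAut_apply]
          exact GAux.Fmap_b p m n d hdn hdm hp hn1 _ _ }
  have e2 : S ≃ {A : ZMod (p ^ m) × ZMod (p ^ n) × ZMod (p ^ d) // IsUnit A.1} ×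
      {B : ZMod (p ^ m) × ZMod (p ^ n) × ZMod (p ^ d) //
        (p : ZMod (p ^ m)) ^ n * B.1 = 0 ∧ IsUnit B.2.1} :=
    Equiv.subtypeProdEquivProd
      (p := fun A : ZMod (p ^ m) × ZMod (p ^ n) × ZMod (p ^ d) => IsUnit A.1)
      (q := fun B : ZMod (p ^ m) × ZMod (p ^ n) × ZMod (p ^ d) =>
        (p : ZMod (p ^ m)) ^ n * B.1 = 0 ∧ IsUnit B.2.1)
  have e3 : {A : ZMod (p ^ m) × ZMod (p ^ n) × ZMod (p ^ d) // IsUnit A.1} ≃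
      {a : ZMod (p ^ m) // IsUnit a} × ZMod (p ^ n) × ZMod (p ^ d) :=
    subtypeFst (P := fun a : ZMod (p ^ m) => IsUnit a)
  have e4 : {B : ZMod (p ^ m) × ZMod (p ^ n) × ZMod (p ^ d) //
      (p : ZMod (p ^ m)) ^ n * B.1 = 0 ∧ IsUnit B.2.1} ≃
      {b1 : ZMod (p ^ m) // (p : ZMod (p ^ m)) ^ n * b1 = 0} ×
        {b2 : ZMod (p ^ n) // IsUnit b2} × ZMod (p ^ d) :=
    subtypeTwo (P := fun b1 : ZMod (p ^ m) => (p : ZMod (p ^ m)) ^ n * b1 = 0)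
      (Q := fun b2 : ZMod (p ^ n) => IsUnit b2)
  have E : MulAut (GCar p m n d) ≃
      ({a : ZMod (p ^ m) // IsUnit a} × ZMod (p ^ n) × ZMod (p ^ d)) ×
      ({b1 : ZMod (p ^ m) // (p : ZMod (p ^ m)) ^ n * b1 = 0} ×
        {b2 : ZMod (p ^ n) // IsUnit b2} × ZMod (p ^ d)) :=
    e1.trans (e2.trans (e3.prodCongr e4))
  rw [Nat.card_congr E, Nat.card_prod, Nat.card_prod, Nat.card_prod, Nat.card_prod,
    Nat.card_prod, card_units_subtype hp m hm1, card_units_subtype hp n hn1,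
    card_ann hp hnm.le, Nat.card_zmod, Nat.card_zmod]
  have hE : p ^ (2 * d + 3 * n + m - 2) =
      p ^ (m - 1) * p ^ n * p ^ d * p ^ n * p ^ (n - 1) * p ^ d := by
    rw [← pow_add, ← pow_add, ← pow_add, ← pow_add, ← pow_add]
    congr 1
    omega
  rw [hE]
  ring
end

section
/- Let p be a prime and let R be a finite local nearring of order p^n. Then the Frattini subgroup of the additive group (R,+) is contained in L, the subgroup of all non-invertible elements of R. -/
/-- A (left) nearring with (multiplicative) identity: `(R,+)` is a (not necessarily
abelian) group with neutral element `0`, `(R,·)` is a monoid (so with identity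
element `i = 1`), and the left distributive law `x·(y+z) = x·y + x·z` holds. -/
class LeftNearring (R : Type*) extends AddGroup R, Monoid R where
  left_distrib : ∀ x y z : R, x * (y + z) = x * y + x * z

/-- The Frattini subgroup of an additive group: the intersection of all its maximal
subgroups (i.e. of all coatoms of its subgroup lattice). -/
def addFrattini (G : Type*) [AddGroup G] : AddSubgroup G :=
  Order.radical (AddSubgroup G)

section aux

variable {R : Type*} [LeftNearring R]

lemma LeftNearring.mul_zero (a : R) : a * 0 = 0 := by
  have h := LeftNearring.left_distrib a 0 0
  rw [add_zero] at h
  exact (add_eq_left.mp h.symm)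

/-- Left multiplication by a unit, as an additive automorphism. -/
def LeftNearring.mulLeftAddEquiv (u : Rˣ) : R ≃+ R where
  toFun x := (u : R) * x
  invFun x := ((u⁻¹ : Rˣ) : R) * x
  left_inv x := by show ((u⁻¹ : Rˣ) : R) * ((u : R) * x) = x; rw [← mul_assoc]; simp
  right_inv x := by show ((u : R)) * (((u⁻¹ : Rˣ) : R) * x) = x; rw [← mul_assoc]; simp
  map_add' x y := LeftNearring.left_distrib _ x y

/-- An additive isomorphism induces an order isomorphism of subgroup lattices
via preimages. -/
def comapAddSubgroupEquiv {G H : Type*} [AddGroup G] [AddGroup H] (f : G ≃+ H) :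
    AddSubgroup H ≃o AddSubgroup G where
  toFun := AddSubgroup.comap f.toAddMonoidHom
  invFun := AddSubgroup.comap f.symm.toAddMonoidHom
  left_inv sg := by
    ext x; simp [AddSubgroup.mem_comap]
  right_inv sh := by
    ext x; simp [AddSubgroup.mem_comap]
  map_rel_iff' {s t} := by
    constructor
    · intro h x hx
      have h1 : f.symm x ∈ AddSubgroup.comap f.toAddMonoidHom s := by
        simpa using hx
      have h2 := h h1
      simpa using h2
    · intro h x hx
      exact h hx

end aux

/-- Let `R` be a local nearring of order `p^n` (`p` prime), with `L` its subgroup of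
non-invertible elements. Then the Frattini subgroup of `(R,+)` is contained in `L`. -/
theorem addFrattini_le_nonunits (p n : ℕ) (hp : p.Prime)
    (R : Type*) [LeftNearring R] [Finite R] (hcard : Nat.card R = p ^ n)
    (L : AddSubgroup R) (hL : ∀ x : R, x ∈ L ↔ ¬IsUnit x) :
    addFrattini R ≤ L := by
  intro x hx
  rw [hL]
  intro hxu
  obtain ⟨ux, hux⟩ := hxu
  -- the Frattini subgroup is characteristic
  have hchar : ∀ (e : R ≃+ R), AddSubgroup.comap e.toAddMonoidHom (addFrattini R)
      = addFrattini R := fun e => (comapAddSubgroupEquiv e).map_radical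
  -- every unit lies in the Frattini subgroup
  have hunits : ∀ w : R, IsUnit w → w ∈ addFrattini R := by
    intro w hw
    obtain ⟨uw, huw⟩ := hw
    set e := LeftNearring.mulLeftAddEquiv (uw * ux⁻¹) with he
    have hex : e x ∈ addFrattini R := by
      have : x ∈ AddSubgroup.comap e.toAddMonoidHom (addFrattini R) := by
        rw [hchar e]; exact hx
      simpa using this
    have : e x = w := by
      show ((uw * ux⁻¹ : Rˣ) : R) * x = w
      rw [← hux, ← huw]
      push_cast
      rw [mul_assoc]
      simp
    rwa [this] at hex
  -- hence L together with the Frattini subgroup is everything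
  have hsup : L ⊔ addFrattini R = ⊤ := by
    rw [eq_top_iff]
    intro z _
    by_cases hz : IsUnit z
    · exact AddSubgroup.mem_sup_right (hunits z hz)
    · exact AddSubgroup.mem_sup_left ((hL z).mpr hz)
  -- by the non-generating property of the radical, `L = ⊤`
  have hLtop : L = ⊤ := Order.radical_nongenerating hsup
  -- but `1 ∈ L` contradicts `IsUnit 1`
  have h1 : (1 : R) ∈ L := hLtop ▸ AddSubgroup.mem_top 1
  exact (hL 1).mp h1 isUnit_one
end

section
/- With R, a, b, c, α, β, γ as described, for every x ∈ R with unique expression x = a·x1 + b·x2 + c·x3 one has x·c = c·(x1·β(x) − x2·α(x)), where the coefficient is computed modulo p^d. -/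
private lemma add_swap3 {G : Type*} [AddGroup G] {z a : G} (h : AddCommute z a) (w : G) :
    z + (a + w) = a + (z + w) := by rw [← add_assoc, h.eq, add_assoc]

private lemma ln_mul_zero {R : Type*} [LeftNearring R] (x : R) : x * 0 = 0 := by
  have h := LeftNearring.left_distrib x 0 0
  rw [add_zero] at h
  exact left_eq_add.mp h

private lemma ln_mul_neg {R : Type*} [LeftNearring R] (x y : R) : x * (-y) = -(x * y) := by
  have h := LeftNearring.left_distrib x y (-y)
  rw [add_neg_cancel, ln_mul_zero] at h
  exact (neg_eq_of_add_eq_zero_right h.symm).symm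

/-- With `R` a nearring with identity `a = 1`, additive generators `a`, `b`, `c` of
additive orders `p^m`, `p^n`, `p^d` satisfying `-b+a+b = a+c`, `-a+c+a = c`,
`-b+c+b = c`, every `x ∈ R` uniquely written as `x = a·x1 + b·x2 + c·x3`, and
`α`, `β`, `γ` defined by `x·b = a·α(x) + b·β(x) + c·γ(x)`: for every `x ∈ R` one has
`x·c = c·(x1·β(x) − x2·α(x))`, the coefficient being computed modulo `p^d`. -/
theorem mul_c_eq
    (p m n d : ℕ) (hp : p.Prime) (hodd : Odd p)
    (hd : 1 ≤ d) (hdn : d ≤ n) (hnm : n ≤ m)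
    (R : Type*) [LeftNearring R] (b c : R)
    (ha : addOrderOf (1 : R) = p ^ m) (hb : addOrderOf b = p ^ n)
    (hc : addOrderOf c = p ^ d)
    (hrel1 : -b + 1 + b = 1 + c) (hrel2 : -(1 : R) + c + 1 = c)
    (hrel3 : -b + c + b = c)
    (x1 x2 x3 : R → ℕ)
    (hx1 : ∀ x, x1 x < p ^ m) (hx2 : ∀ x, x2 x < p ^ n) (hx3 : ∀ x, x3 x < p ^ d)
    (hrepr : ∀ x : R, x = x1 x • (1 : R) + x2 x • b + x3 x • c)
    (huniq : ∀ u1 u2 u3 : ℕ, u1 < p ^ m → u2 < p ^ n → u3 < p ^ d →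
      ∀ x : R, x = u1 • (1 : R) + u2 • b + u3 • c →
        u1 = x1 x ∧ u2 = x2 x ∧ u3 = x3 x)
    (α : R → ZMod (p ^ m)) (β : R → ZMod (p ^ n)) (γ : R → ZMod (p ^ d))
    (hαβγ : ∀ x : R, x * b = (α x).val • (1 : R) + (β x).val • b + (γ x).val • c)
    : ∀ x : R,
      x * c = ((x1 x : ZMod (p ^ d)) * (ZMod.cast (β x) : ZMod (p ^ d)) -
        (x2 x : ZMod (p ^ d)) * (ZMod.cast (α x) : ZMod (p ^ d))).val • c := by
  have hpdne : NeZero (p ^ d) := ⟨(pow_pos hp.pos d).ne'⟩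
  have hpnne : NeZero (p ^ n) := ⟨(pow_pos hp.pos n).ne'⟩
  have hpmne : NeZero (p ^ m) := ⟨(pow_pos hp.pos m).ne'⟩
  -- c commutes with 1
  have h1c : AddCommute c (1 : R) := by
    rw [addCommute_iff_eq]
    have h : (1 : R) + (-(1 : R) + c + 1) = 1 + c := by rw [hrel2]
    simp only [← add_assoc, add_neg_cancel, zero_add] at h
    exact h
  -- c commutes with b
  have hcb : AddCommute c b := by
    rw [addCommute_iff_eq]
    have h : b + (-b + c + b) = b + c := by rw [hrel3]
    simp only [← add_assoc, add_neg_cancel, zero_add] at h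
    exact h
  -- c is central
  have hcg : ∀ g : R, AddCommute c g := by
    intro g
    rw [hrepr g]
    exact ((h1c.nsmul_right _).add_right (hcb.nsmul_right _)).add_right
      ((AddCommute.refl c).nsmul_right _)
  -- commutation of b and 1
  have h1b : (1 : R) + b = b + 1 + c := by
    have h : b + (-b + 1 + b) = b + (1 + c) := by rw [hrel1]
    simp only [← add_assoc, add_neg_cancel, zero_add] at h
    exact h
  have hb1 : b + (1 : R) = 1 + b + -c := by
    rw [h1b, add_assoc, add_neg_cancel, add_zero]
  -- b moved past multiples of 1
  have step1 : ∀ l : ℕ, b + l • (1 : R) = l • (1 : R) + (b + l • (-c)) := by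
    intro l
    induction l with
    | zero => simp
    | succ l ih =>
      calc b + (l + 1) • (1 : R) = b + (1 + l • (1 : R)) := by rw [succ_nsmul' (1 : R) l]
        _ = (b + 1) + l • (1 : R) := by rw [add_assoc]
        _ = (1 + b + -c) + l • (1 : R) := by rw [hb1]
        _ = 1 + (b + (-c + l • (1 : R))) := by simp only [add_assoc]
        _ = 1 + (b + (l • (1 : R) + -c)) := by rw [((h1c.nsmul_right l).neg_left).eq]
        _ = 1 + ((b + l • (1 : R)) + -c) := by rw [add_assoc]
        _ = 1 + ((l • (1 : R) + (b + l • (-c))) + -c) := by rw [ih]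
        _ = (1 + l • (1 : R)) + (b + (l • (-c) + -c)) := by simp only [add_assoc]
        _ = (l + 1) • (1 : R) + (b + (l + 1) • (-c)) := by
            rw [← succ_nsmul' (1 : R) l, ← succ_nsmul (-c) l]
  -- multiples of b moved past multiples of 1
  have step2 : ∀ k l : ℕ, k • b + l • (1 : R) = l • (1 : R) + (k • b + (k * l) • (-c)) := by
    intro k l
    induction k with
    | zero => simp
    | succ k ih =>
      have hcom : AddCommute (l • (-c)) (k • b) :=
        ((hcb.neg_left).nsmul_left l).nsmul_right k
      calc (k + 1) • b + l • (1 : R) = b + (k • b + l • (1 : R)) := by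
            rw [succ_nsmul' b k, add_assoc]
        _ = b + (l • (1 : R) + (k • b + (k * l) • (-c))) := by rw [ih]
        _ = (b + l • (1 : R)) + (k • b + (k * l) • (-c)) := by rw [add_assoc]
        _ = (l • (1 : R) + (b + l • (-c))) + (k • b + (k * l) • (-c)) := by rw [step1 l]
        _ = l • (1 : R) + (b + (l • (-c) + (k • b + (k * l) • (-c)))) := by
            simp only [add_assoc]
        _ = l • (1 : R) + (b + (k • b + (l • (-c) + (k * l) • (-c)))) := by
            rw [add_swap3 hcom]
        _ = l • (1 : R) + ((k + 1) • b + (l + k * l) • (-c)) := by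
            rw [← add_assoc b, ← succ_nsmul' b k, ← add_nsmul]
        _ = l • (1 : R) + ((k + 1) • b + ((k + 1) * l) • (-c)) := by
            rw [Nat.succ_mul, Nat.add_comm (k * l) l]
  -- general addition formula in normal form
  have hadd : ∀ A B C A' B' C' : ℕ,
      (A • (1 : R) + (B • b + C • c)) + (A' • (1 : R) + (B' • b + C' • c)) =
        ((A + A') • (1 : R) + ((B + B') • b + (C + C') • c)) + (B * A') • (-c) := by
    intro A B C A' B' C'
    have swC : ∀ (g w : R), AddCommute c g → C • c + (g + w) = g + (C • c + w) :=
      fun g w h => add_swap3 (h.nsmul_left C) w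
    have swQ : ∀ (g w : R), AddCommute c g →
        (B * A') • (-c) + (g + w) = g + ((B * A') • (-c) + w) :=
      fun g w h => add_swap3 ((h.neg_left).nsmul_left (B * A')) w
    calc (A • (1 : R) + (B • b + C • c)) + (A' • (1 : R) + (B' • b + C' • c))
        = A • (1 : R) + (B • b + (C • c + (A' • (1 : R) + (B' • b + C' • c)))) := by
          simp only [add_assoc]
      _ = A • (1 : R) + (B • b + (A' • (1 : R) + (C • c + (B' • b + C' • c)))) := by
          rw [swC _ _ (h1c.nsmul_right A')]
      _ = A • (1 : R) + (B • b + (A' • (1 : R) + (B' • b + (C • c + C' • c)))) := by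
          rw [swC _ _ (hcb.nsmul_right B')]
      _ = A • (1 : R) + ((B • b + A' • (1 : R)) + (B' • b + (C • c + C' • c))) := by
          simp only [add_assoc]
      _ = A • (1 : R) + ((A' • (1 : R) + (B • b + (B * A') • (-c))) +
            (B' • b + (C • c + C' • c))) := by rw [step2 B A']
      _ = A • (1 : R) + (A' • (1 : R) + (B • b + ((B * A') • (-c) +
            (B' • b + (C • c + C' • c))))) := by simp only [add_assoc]
      _ = A • (1 : R) + (A' • (1 : R) + (B • b + (B' • b + ((B * A') • (-c) +
            (C • c + C' • c))))) := by rw [swQ _ _ (hcb.nsmul_right B')]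
      _ = A • (1 : R) + (A' • (1 : R) + (B • b + (B' • b + (C • c + ((B * A') • (-c) +
            C' • c))))) := by rw [swQ _ _ ((AddCommute.refl c).nsmul_right C)]
      _ = A • (1 : R) + (A' • (1 : R) + (B • b + (B' • b + (C • c + (C' • c +
            (B * A') • (-c)))))) := by
          rw [(((AddCommute.refl c).nsmul_right C').neg_left.nsmul_left (B * A')).eq]
      _ = ((A + A') • (1 : R) + ((B + B') • b + (C + C') • c)) + (B * A') • (-c) := by
          simp only [add_nsmul, add_assoc]
  intro x
  set A := x1 x with hA
  set B := x2 x with hB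
  set C := x3 x with hC
  set α' := (α x).val with hα'
  set β' := (β x).val with hβ'
  set γ' := (γ x).val with hγ'
  set y := x * b with hy
  have hxform : x = A • (1 : R) + (B • b + C • c) := by
    rw [hrepr x, add_assoc]
  have hyform : y = α' • (1 : R) + (β' • b + γ' • c) := by
    rw [hy, hαβγ x, add_assoc]
  -- x * c as a commutator
  have hxc : x * c = -x + (-y + (x + y)) := by
    have hc' : c = -(1 : R) + (-b + 1 + b) := by
      rw [hrel1, ← add_assoc, neg_add_cancel, zero_add]
    calc x * c = x * (-(1 : R) + (-b + 1) + b) := by rw [hc']; simp only [← add_assoc]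
      _ = x * (-(1 : R) + (-b + 1)) + x * b := LeftNearring.left_distrib ..
      _ = (x * (-(1 : R)) + x * (-b + 1)) + x * b := by rw [LeftNearring.left_distrib]
      _ = (x * (-(1 : R)) + (x * (-b) + x * 1)) + x * b := by
          rw [LeftNearring.left_distrib]
      _ = (-x + (-(x * b) + x)) + x * b := by rw [ln_mul_neg, ln_mul_neg, mul_one]
      _ = -x + (-y + (x + y)) := by rw [hy]; simp only [add_assoc]
  set M : R := (A + α') • (1 : R) + ((B + β') • b + (C + γ') • c) with hM
  have hxy : x + y = M + (B * α') • (-c) := by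
    rw [hxform, hyform, hadd]
  have hyx : y + x = M + (β' * A) • (-c) := by
    rw [hxform, hyform, hadd, hM, Nat.add_comm α' A, Nat.add_comm β' B, Nat.add_comm γ' C]
  have hcomm : x * c = (β' * A) • c + (B * α') • (-c) := by
    rw [hxc, ← add_assoc, ← neg_add_rev, hyx, hxy, neg_add_rev, add_assoc,
      neg_add_cancel_left, neg_nsmul, neg_neg]
  -- now pass to integers and ZMod
  set V := ((A : ZMod (p ^ d)) * (ZMod.cast (β x) : ZMod (p ^ d)) -
      (B : ZMod (p ^ d)) * (ZMod.cast (α x) : ZMod (p ^ d))).val with hV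
  have hkz : x * c = ((β' * A : ℤ) - (B * α' : ℤ)) • c := by
    rw [hcomm, sub_zsmul, ← natCast_zsmul c (β' * A), ← natCast_zsmul (-c) (B * α'),
      zsmul_neg, Nat.cast_mul, Nat.cast_mul]
  have hdvd : ((p ^ d : ℕ) : ℤ) ∣ ((β' * A : ℤ) - (B * α' : ℤ) - (V : ℤ)) := by
    apply (ZMod.intCast_zmod_eq_zero_iff_dvd _ _).mp
    push_cast
    rw [hβ', hα', hV, ZMod.natCast_val (β x), ZMod.natCast_val (α x),
      ZMod.natCast_val, ZMod.cast_id]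
    ring
  have hzero : ((β' * A : ℤ) - (B * α' : ℤ) - (V : ℤ)) • c = 0 :=
    addOrderOf_dvd_iff_zsmul_eq_zero.mp (by rw [hc]; exact hdvd)
  have : x * c = (V : ℤ) • c := by
    have h2 : ((β' * A : ℤ) - (B * α' : ℤ)) • c =
        (((β' * A : ℤ) - (B * α' : ℤ) - (V : ℤ)) + (V : ℤ)) • c := by ring_nf
    rw [hkz, h2, add_zsmul, hzero, zero_add]
  rw [this, natCast_zsmul]
end

section
/- With R, a, b, c, α, β, γ as described, for all x = a·x1 + b·x2 + c·x3 and y = a·y1 + b·y2 + c·y3 in R one has x·y = a·(x1·y1 + y2·α(x)) + b·(x2·y1 + y2·β(x)) + c·(−x1·x2·binom(y1,2) − binom(y2,2)·α(x)·β(x) − x2·y1·y2·α(x) + x3·y1 + y2·γ(x) + x1·y3·β(x) − x2·y3·α(x)), where the three coefficients are computed modulo p^m, p^n and p^d respectively and binom(r,2) = r(r−1)/2. -/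
section Grp
variable {R : Type*} [LeftNearring R] {b c : R}
  (central : ∀ x : R, AddCommute c x)
  (hrel1 : -b + 1 + b = 1 + c)

lemma moveC {g : R} (hg : ∀ x : R, AddCommute g x) (x t : R) :
    g + (x + t) = x + (g + t) := by
  rw [← add_assoc, (hg x).eq, add_assoc]

lemma moveC2 {g : R} (hg : ∀ x : R, AddCommute g x) (x : R) :
    g + x = x + g := (hg x).eq

include central in
lemma centZ (z : ℤ) : ∀ x : R, AddCommute (z • c) x :=
  fun x => (central x).zsmul_left z

include hrel1 in
lemma h1b : (1 : R) + b = b + (1 + c) := by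
  have h := congrArg (b + ·) hrel1
  rw [← add_assoc, ← add_assoc, add_neg_cancel, zero_add] at h
  exact h

include central hrel1 in
lemma L1 (v : ℕ) : (1 : R) + v • b = v • b + (1 + (v : ℤ) • c) := by
  induction v with
  | zero => simp
  | succ k ih =>
      calc (1 : R) + (k+1) • b
          = ((1:R) + k • b) + b := by
            simp only [succ_nsmul, add_assoc]
        _ = k • b + (1 + ((k:ℤ) • c + b)) := by
            rw [ih]; simp only [add_assoc]
        _ = k • b + (1 + (b + (k:ℤ) • c)) := by
            rw [moveC2 (centZ central k)]
        _ = k • b + (b + (1 + (c + (k:ℤ) • c))) := by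
            rw [← add_assoc (1:R) b, h1b hrel1]; simp only [add_assoc]
        _ = (k+1) • b + (1 + ((k:ℕ)+1 : ℤ) • c) := by
            rw [moveC2 (centZ central k) c |>.symm]
            push_cast
            simp only [succ_nsmul, add_zsmul, one_zsmul, add_assoc]

include central hrel1 in
lemma Lswap (u v : ℕ) : u • (1:R) + v • b = v • b + (u • (1:R) + ((u*v : ℕ) : ℤ) • c) := by
  induction u with
  | zero => simp
  | succ k ih =>
      calc (k+1) • (1:R) + v • b
          = k • (1:R) + ((1:R) + v • b) := by
            simp only [succ_nsmul, add_assoc]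
        _ = k • (1:R) + (v • b + (1 + (v:ℤ) • c)) := by rw [L1 central hrel1]
        _ = (k • (1:R) + v • b) + (1 + (v:ℤ) • c) := by simp only [add_assoc]
        _ = v • b + (k • (1:R) + (((k*v : ℕ):ℤ) • c + (1 + (v:ℤ) • c))) := by
            rw [ih]; simp only [add_assoc]
        _ = v • b + (k • (1:R) + (1 + (((k*v : ℕ):ℤ) • c + (v:ℤ) • c))) := by
            rw [moveC (centZ central ((k*v : ℕ):ℤ))]
        _ = v • b + ((k+1) • (1:R) + (((k+1)*v : ℕ) : ℤ) • c) := by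
            rw [← add_zsmul]
            have : ((k*v : ℕ):ℤ) + (v:ℤ) = (((k+1)*v : ℕ) : ℤ) := by push_cast; ring
            rw [this]
            simp only [succ_nsmul, add_assoc]

include central hrel1 in
lemma Lswap' (u v : ℕ) :
    v • b + u • (1:R) = u • (1:R) + (v • b + (-((u*v : ℕ) : ℤ)) • c) := by
  have h : u • (1:R) + (v • b + (-((u*v : ℕ):ℤ)) • c) = v • b + u • (1:R) := by
    rw [← add_assoc, Lswap central hrel1, add_assoc, add_assoc, ← add_zsmul]
    simp
  exact h.symm

include central hrel1 in
lemma LaddN (u v u' v' : ℕ) (w w' : ℤ) :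
    (u • (1:R) + (v • b + w • c)) + (u' • (1:R) + (v' • b + w' • c)) =
    (u+u') • (1:R) + ((v+v') • b + (w+w'-((u'*v : ℕ):ℤ)) • c) := by
  calc (u • (1:R) + (v • b + w • c)) + (u' • (1:R) + (v' • b + w' • c))
      = u • (1:R) + (v • b + (w • c + (u' • (1:R) + (v' • b + w' • c)))) := by
        simp only [add_assoc]
    _ = u • (1:R) + (v • b + (u' • (1:R) + (v' • b + (w+w') • c))) := by
        rw [moveC (centZ central w), moveC (centZ central w), ← add_zsmul]
    _ = u • (1:R) + (u' • (1:R) + ((v • b + (-((u'*v:ℕ):ℤ)) • c) + (v' • b + (w+w') • c))) := by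
        rw [← add_assoc (v • b), Lswap' central hrel1]; simp only [add_assoc]
    _ = (u+u') • (1:R) + (v • b + (v' • b + ((-((u'*v:ℕ):ℤ)) • c + (w+w') • c))) := by
        rw [← add_assoc (u • (1:R)), ← add_nsmul]
        simp only [add_assoc]
        rw [moveC (centZ central (-((u'*v:ℕ):ℤ)))]
    _ = (u+u') • (1:R) + ((v+v') • b + (w+w'-((u'*v:ℕ):ℤ)) • c) := by
        rw [← add_assoc (v • b), ← add_nsmul, ← add_zsmul]
        have : -((u'*v:ℕ):ℤ) + (w+w') = w+w'-((u'*v:ℕ):ℤ) := by ring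
        rw [this]

include central hrel1 in
lemma LsmulN (k u v : ℕ) (w : ℤ) :
    k • (u • (1:R) + (v • b + w • c)) =
    (k*u) • (1:R) + ((k*v) • b + ((k:ℤ)*w - ((k.choose 2 * (u*v) : ℕ) : ℤ)) • c) := by
  induction k with
  | zero => simp
  | succ k ih =>
      rw [succ_nsmul, ih, LaddN central hrel1]
      have h1 : k*u + u = (k+1)*u := by ring
      have h2 : k*v + v = (k+1)*v := by ring
      have hch : (k+1).choose 2 = k.choose 2 + k := by
        rw [Nat.choose_succ_succ]
        simp [Nat.choose_one_right, Nat.add_comm]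
      rw [h1, h2, show ((k:ℤ) * w - ((k.choose 2 * (u * v) : ℕ) : ℤ) + w - ((u * (k * v) : ℕ) : ℤ))
          = (((k+1 : ℕ) : ℤ) * w - (((k + 1).choose 2 * (u * v) : ℕ) : ℤ)) from by
        rw [hch]; push_cast; ring]

lemma LcancelN (U V : ℕ) (W W' : ℤ) :
    -(U • (1:R) + (V • b + W • c)) + (U • (1:R) + (V • b + W' • c)) = (W'-W) • c := by
  rw [neg_add_rev, neg_add_rev]
  simp only [add_assoc]
  rw [neg_add_cancel_left, neg_add_cancel_left, ← neg_zsmul, ← add_zsmul]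
  congr 1
  ring

end Grp

section Aux
variable {R : Type*} [LeftNearring R]

lemma nr_mul_add (x y z : R) : x * (y + z) = x * y + x * z :=
  LeftNearring.left_distrib x y z

lemma nr_mul_zero (x : R) : x * 0 = 0 := by
  have h := nr_mul_add x 0 0
  rw [add_zero] at h
  exact left_eq_add.mp h

lemma nr_mul_neg (x y : R) : x * (-y) = -(x * y) := by
  have h := nr_mul_add x y (-y)
  rw [add_neg_cancel, nr_mul_zero] at h
  exact (neg_eq_of_add_eq_zero_right h.symm).symm

lemma nr_mul_nsmul (x y : R) (k : ℕ) : x * (k • y) = k • (x * y) := by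
  induction k with
  | zero => simp [nr_mul_zero]
  | succ k ih => rw [succ_nsmul, nr_mul_add, ih, succ_nsmul]

lemma valsmul (g : R) (N : ℕ) [NeZero N] (hg : addOrderOf g = N) (z : ℤ)
    (e : ZMod N) (h : (z : ZMod N) = e) : z • g = e.val • g := by
  have hdvd : (N : ℤ) ∣ z - (e.val : ℤ) := by
    refine (ZMod.intCast_zmod_eq_zero_iff_dvd _ N).mp ?_
    push_cast
    rw [h, ZMod.natCast_val, ZMod.cast_id, sub_self]
  have hz : (z - (e.val : ℤ)) • g = 0 := by
    rw [← addOrderOf_dvd_iff_zsmul_eq_zero, hg]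
    exact hdvd
  calc z • g = ((e.val : ℤ) + (z - (e.val : ℤ))) • g := by ring_nf
    _ = (e.val : ℤ) • g + (z - (e.val : ℤ)) • g := add_zsmul g _ _
    _ = (e.val : ℤ) • g := by rw [hz, add_zero]
    _ = e.val • g := natCast_zsmul g _

end Aux

/-- With `R`, `a = 1`, `b`, `c`, `α`, `β`, `γ` as in the paper: the product of
`x = a·x1 + b·x2 + c·x3` and `y = a·y1 + b·y2 + c·y3` is given by
`x·y = a·(x1y1 + y2α(x)) + b·(x2y1 + y2β(x)) + c·(−x1x2·binom(y1,2)
− binom(y2,2)·α(x)β(x) − x2y1y2α(x) + x3y1 + y2γ(x) + x1y3β(x) − x2y3α(x))`, the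
three coefficients being computed modulo `p^m`, `p^n`, `p^d` respectively. -/
theorem mul_formula
    (p m n d : ℕ) (hp : p.Prime) (hodd : Odd p)
    (hd : 1 ≤ d) (hdn : d ≤ n) (hnm : n ≤ m)
    (R : Type*) [LeftNearring R] (b c : R)
    (ha : addOrderOf (1 : R) = p ^ m) (hb : addOrderOf b = p ^ n)
    (hc : addOrderOf c = p ^ d)
    (hrel1 : -b + 1 + b = 1 + c) (hrel2 : -(1 : R) + c + 1 = c)
    (hrel3 : -b + c + b = c)
    (x1 x2 x3 : R → ℕ)
    (hx1 : ∀ x, x1 x < p ^ m) (hx2 : ∀ x, x2 x < p ^ n) (hx3 : ∀ x, x3 x < p ^ d)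
    (hrepr : ∀ x : R, x = x1 x • (1 : R) + x2 x • b + x3 x • c)
    (huniq : ∀ u1 u2 u3 : ℕ, u1 < p ^ m → u2 < p ^ n → u3 < p ^ d →
      ∀ x : R, x = u1 • (1 : R) + u2 • b + u3 • c →
        u1 = x1 x ∧ u2 = x2 x ∧ u3 = x3 x)
    (α : R → ZMod (p ^ m)) (β : R → ZMod (p ^ n)) (γ : R → ZMod (p ^ d))
    (hαβγ : ∀ x : R, x * b = (α x).val • (1 : R) + (β x).val • b + (γ x).val • c)
    : ∀ x y : R,
      x * y =
        ((x1 x : ZMod (p ^ m)) * (x1 y : ZMod (p ^ m)) +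
          (x2 y : ZMod (p ^ m)) * α x).val • (1 : R) +
        ((x2 x : ZMod (p ^ n)) * (x1 y : ZMod (p ^ n)) +
          (x2 y : ZMod (p ^ n)) * β x).val • b +
        (-((x1 x : ZMod (p ^ d)) * (x2 x : ZMod (p ^ d)) *
            ((x1 y).choose 2 : ZMod (p ^ d))) -
          ((x2 y).choose 2 : ZMod (p ^ d)) * (ZMod.cast (α x) : ZMod (p ^ d)) *
            (ZMod.cast (β x) : ZMod (p ^ d)) -
          (x2 x : ZMod (p ^ d)) * (x1 y : ZMod (p ^ d)) * (x2 y : ZMod (p ^ d)) *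
            (ZMod.cast (α x) : ZMod (p ^ d)) +
          (x3 x : ZMod (p ^ d)) * (x1 y : ZMod (p ^ d)) +
          (x2 y : ZMod (p ^ d)) * γ x +
          (x1 x : ZMod (p ^ d)) * (x3 y : ZMod (p ^ d)) *
            (ZMod.cast (β x) : ZMod (p ^ d)) -
          (x2 x : ZMod (p ^ d)) * (x3 y : ZMod (p ^ d)) *
            (ZMod.cast (α x) : ZMod (p ^ d))).val • c := by
  intro x y
  haveI : NeZero (p ^ m) := ⟨(pow_pos hp.pos m).ne'⟩
  haveI : NeZero (p ^ n) := ⟨(pow_pos hp.pos n).ne'⟩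
  haveI : NeZero (p ^ d) := ⟨(pow_pos hp.pos d).ne'⟩
  -- c is central
  have hc1 : AddCommute c (1 : R) := by
    have h := congrArg ((1 : R) + ·) hrel2
    rw [← add_assoc, ← add_assoc, add_neg_cancel, zero_add] at h
    exact h
  have hcb : AddCommute c b := by
    have h := congrArg (b + ·) hrel3
    rw [← add_assoc, ← add_assoc, add_neg_cancel, zero_add] at h
    exact h
  have central : ∀ z : R, AddCommute c z := by
    intro z
    rw [hrepr z]
    exact ((hc1.nsmul_right _).add_right (hcb.nsmul_right _)).add_right
      ((AddCommute.refl c).nsmul_right _)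
  -- abbreviations
  set A1 := x1 x with hA1
  set A2 := x2 x with hA2
  set A3 := x3 x with hA3
  set B1 := x1 y with hB1
  set B2 := x2 y with hB2
  set B3 := x3 y with hB3
  set av := (α x).val with hav
  set bv := (β x).val with hbv
  set gv := (γ x).val with hgv
  -- normal forms
  have hx : x = A1 • (1:R) + (A2 • b + (A3 : ℤ) • c) := by
    rw [natCast_zsmul, ← add_assoc]; exact hrepr x
  have hxb : x * b = av • (1:R) + (bv • b + (gv : ℤ) • c) := by
    rw [natCast_zsmul, ← add_assoc]; exact hαβγ x
  -- x * c
  have hceq : c = -(1:R) + (-b + ((1:R) + b)) := by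
    have h := hrel1
    have h2 : -(1:R) + (-b + 1 + b) = c := by rw [hrel1, neg_add_cancel_left]
    rw [← h2]
    simp only [add_assoc]
  have hxc : x * c = (((A1 * bv : ℕ) : ℤ) - ((av * A2 : ℕ) : ℤ)) • c := by
    have e1 : x * c = -x + (-(x * b) + (x + x * b)) := by
      conv_lhs => rw [hceq]
      rw [nr_mul_add, nr_mul_add, nr_mul_add, nr_mul_neg, nr_mul_neg, mul_one]
    have e2 : x * c = -(x * b + x) + (x + x * b) := by
      rw [e1, neg_add_rev, add_assoc]
    rw [e2]
    rw [hxb, hx, LaddN central hrel1, LaddN central hrel1]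
    rw [Nat.add_comm av A1, Nat.add_comm bv A2]
    rw [LcancelN]
    congr 1
    ring
  -- expand x * y
  have expand : x * y = B1 • x + (B2 • (x * b) + B3 • (x * c)) := by
    conv_lhs => rw [hrepr y]
    rw [nr_mul_add, nr_mul_add, nr_mul_nsmul, nr_mul_nsmul, nr_mul_nsmul, mul_one,
      add_assoc]
  have hs3 : B3 • ((((A1 * bv : ℕ) : ℤ) - ((av * A2 : ℕ) : ℤ)) • c) =
      (0:ℕ) • (1:R) + ((0:ℕ) • b + ((B3 : ℤ) * (((A1 * bv : ℕ) : ℤ) - ((av * A2 : ℕ) : ℤ))) • c) := by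
    rw [← natCast_zsmul, ← mul_zsmul]; simp
  conv_lhs => rw [expand, hxc, hxb, hx, LsmulN central hrel1, LsmulN central hrel1,
    hs3, LaddN central hrel1, LaddN central hrel1]
  rw [← add_assoc]
  congr 1
  · congr 1
    · rw [← natCast_zsmul]
      refine valsmul _ _ ha _ _ ?_
      push_cast
      rw [hav]
      simp only [ZMod.natCast_val, ZMod.cast_id]
      ring
    · rw [← natCast_zsmul]
      refine valsmul _ _ hb _ _ ?_
      push_cast
      rw [hbv]
      simp only [ZMod.natCast_val, ZMod.cast_id]
      ring
  · refine valsmul _ _ hc _ _ ?_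
    push_cast
    rw [hav, hbv, hgv]
    simp only [ZMod.natCast_val, ZMod.cast_id]
    ring
end

section
/- With R, a, b, c, α, β, γ as described, for all x = a·x1 + b·x2 + c·x3 and y = a·y1 + b·y2 + c·y3 in R the following congruences hold: α(x·y) ≡ x1·α(y) + α(x)·β(y) (mod p^m); β(x·y) ≡ x2·α(y) + β(x)·β(y) (mod p^n); and γ(x·y) ≡ −x1·x2·binom(α(y),2) − α(x)·β(x)·binom(β(y),2) − x2·α(x)·α(y)·β(y) + x3·α(y) + γ(x)·β(y) + x1·β(x)·γ(y) − x2·α(x)·γ(y) (mod p^d), where binom(r,2) = r(r−1)/2. -/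
namespace NRAux
variable {R : Type*} [LeftNearring R] (b c : R)

def zE (u v w : ℤ) : R := u • (1 : R) + v • b + w • c

theorem zE_congr {u v w u' v' w' : ℤ} (h1 : u = u') (h2 : v = v') (h3 : w = w') :
    zE b c u v w = zE b c u' v' w' := by rw [h1, h2, h3]

/-- move a `c`-multiple right past a `1`-multiple -/
theorem mc1 (hc1 : AddCommute c (1 : R)) (w u : ℤ) (x : R) :
    w • c + (u • (1:R) + x) = u • (1:R) + (w • c + x) := by
  rw [← add_assoc, ((hc1.zsmul_left w).zsmul_right u).eq, add_assoc]

theorem mcb (hcb : AddCommute c b) (w v : ℤ) (x : R) :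
    w • c + (v • b + x) = v • b + (w • c + x) := by
  rw [← add_assoc, ((hcb.zsmul_left w).zsmul_right v).eq, add_assoc]

theorem mcbone (hcb : AddCommute c b) (w : ℤ) (x : R) :
    w • c + (b + x) = b + (w • c + x) := by
  rw [← add_assoc, ((hcb.zsmul_left w)).eq, add_assoc]

theorem mcc (w w' : ℤ) (x : R) : w • c + (w' • c + x) = (w + w') • c + x := by
  rw [← add_assoc, ← add_zsmul]

theorem mcc' (w w' : ℤ) : w • c + w' • c = (w + w') • c := (add_zsmul c w w').symm

theorem m11 (u u' : ℤ) (x : R) : u • (1:R) + (u' • (1:R) + x) = (u + u') • (1:R) + x := by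
  rw [← add_assoc, ← add_zsmul]

theorem mbb (v v' : ℤ) (x : R) : v • b + (v' • b + x) = (v + v') • b + x := by
  rw [← add_assoc, ← add_zsmul]

theorem mbb1 (v : ℤ) (x : R) : v • b + (b + x) = (v + 1) • b + x := by
  rw [← add_assoc, show v • b + b = (v+1) • b by rw [add_zsmul, one_zsmul]]

theorem m11one (u : ℤ) (x : R) : u • (1:R) + ((1:R) + x) = (u + 1) • (1:R) + x := by
  rw [← add_assoc, show u • (1:R) + 1 = (u+1) • (1:R) by rw [add_zsmul, one_zsmul]]

/-- `b + 1 = 1 + (b + (-1)•c)`, the right-assoc form of the basic relation. -/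
theorem h1neg (hc1 : AddCommute c (1 : R))
    (hb1 : b + (1:R) = 1 + (b + (-1 : ℤ) • c)) :
    b + (-1:ℤ) • (1:R) = (-1:ℤ) • (1:R) + (b + (1:ℤ) • c) := by
  have e1 : ((-1:ℤ) • (1:R)) = -(1:R) := by simp
  have e2 : ((1:ℤ) • c : R) = c := one_zsmul c
  have e3 : ((-1:ℤ) • c : R) = -c := by simp
  rw [e1, e2]
  have key : -(1:R) + (b + 1) = b + -c := by
    rw [hb1, e3]; simp only [neg_add_cancel_left]
  have k2 : -(1:R) + b = b + -c + -(1:R) := by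
    have := congrArg (fun z : R => z + -(1:R)) key
    simpa only [add_assoc, add_neg_cancel, add_zero] using this
  have : -(1:R) + b + c = b + -(1:R) := by
    calc -(1:R) + b + c = (b + -c + -(1:R)) + c := by rw [k2]
      _ = b + (-c + (-(1:R) + c)) := by simp only [add_assoc]
      _ = b + (-c + (c + -(1:R))) := by rw [(hc1.neg_right.symm).eq]
      _ = b + -(1:R) := by rw [neg_add_cancel_left]
  rw [← this, add_assoc]

theorem swap_one (hc1 : AddCommute c (1 : R))
    (hb1 : b + (1:R) = 1 + (b + (-1 : ℤ) • c)) (u : ℤ) :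
    b + u • (1:R) = u • (1:R) + (b + (-u) • c) := by
  induction u using Int.induction_on with
  | zero => simp
  | succ k ih =>
      calc b + ((k:ℤ)+1) • (1:R)
          = (b + (k:ℤ) • (1:R)) + 1 := by
            rw [add_zsmul, one_zsmul, add_assoc]
        _ = ((k:ℤ) • (1:R) + (b + (-(k:ℤ)) • c)) + 1 := by rw [ih]
        _ = (k:ℤ) • (1:R) + (b + ((-(k:ℤ)) • c + 1)) := by simp only [add_assoc]
        _ = (k:ℤ) • (1:R) + (b + (1 + (-(k:ℤ)) • c)) := by
            rw [(hc1.zsmul_left (-(k:ℤ))).eq]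
        _ = (k:ℤ) • (1:R) + ((b + 1) + (-(k:ℤ)) • c) := by simp only [add_assoc]
        _ = (k:ℤ) • (1:R) + ((1 + (b + (-1:ℤ) • c)) + (-(k:ℤ)) • c) := by rw [hb1]
        _ = (k:ℤ) • (1:R) + (1 + (b + ((-1:ℤ) • c + (-(k:ℤ)) • c))) := by
            simp only [add_assoc]
        _ = ((k:ℤ)+1) • (1:R) + (b + (-((k:ℤ)+1)) • c) := by
            rw [mcc', show (-1 + -(k:ℤ)) = -((k:ℤ)+1) by ring, m11one]
  | pred k ih =>
      calc b + (-(k:ℤ)-1) • (1:R)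
          = (b + (-(k:ℤ)) • (1:R)) + (-1:ℤ) • (1:R) := by
            rw [show (-(k:ℤ)-1) = (-(k:ℤ)) + (-1) by ring, add_zsmul, add_assoc]
        _ = (-(k:ℤ)) • (1:R) + (b + ((k:ℤ) • c + (-1:ℤ) • (1:R))) := by
            rw [ih]; simp only [neg_neg, add_assoc]
        _ = (-(k:ℤ)) • (1:R) + (b + ((-1:ℤ) • (1:R) + (k:ℤ) • c)) := by
            rw [((hc1.zsmul_left (k:ℤ)).zsmul_right (-1)).eq]
        _ = (-(k:ℤ)) • (1:R) + ((b + (-1:ℤ) • (1:R)) + (k:ℤ) • c) := by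
            simp only [add_assoc]
        _ = (-(k:ℤ)) • (1:R) + (((-1:ℤ) • (1:R) + (b + (1:ℤ) • c)) + (k:ℤ) • c) := by
            rw [h1neg b c hc1 hb1]
        _ = (-(k:ℤ)) • (1:R) + ((-1:ℤ) • (1:R) + (b + ((1:ℤ) • c + (k:ℤ) • c))) := by
            simp only [add_assoc]
        _ = (-(k:ℤ)-1) • (1:R) + (b + (-(-(k:ℤ)-1)) • c) := by
            rw [mcc', m11 (R := R)]
            rw [show (-(k:ℤ) + -1) = -(k:ℤ)-1 by ring,
              show ((1:ℤ) + (k:ℤ)) = -(-(k:ℤ)-1) by ring]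

/-- trailing-`x` version of `swap_one` -/
theorem s1x (hc1 : AddCommute c (1 : R))
    (hb1 : b + (1:R) = 1 + (b + (-1 : ℤ) • c)) (u : ℤ) (x : R) :
    b + (u • (1:R) + x) = u • (1:R) + (b + ((-u) • c + x)) := by
  rw [← add_assoc, swap_one b c hc1 hb1 u]; simp only [add_assoc]

/-- `-b` version of `swap_one` -/
theorem swap_one' (hc1 : AddCommute c (1 : R)) (hcb : AddCommute c b)
    (hb1 : b + (1:R) = 1 + (b + (-1 : ℤ) • c)) (u : ℤ) :
    (-1:ℤ) • b + u • (1:R) = u • (1:R) + ((-1:ℤ) • b + u • c) := by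
  apply add_left_cancel (a := b)
  rw [← add_assoc, show b + (-1:ℤ) • b = 0 by simp, zero_add,
      s1x b c hc1 hb1, mcb b c hcb, mcc',
      show (-u + u : ℤ) = 0 by ring, zero_zsmul, add_zero,
      show b + (-1:ℤ) • b = 0 by simp, add_zero]

theorem s1x' (hc1 : AddCommute c (1 : R)) (hcb : AddCommute c b)
    (hb1 : b + (1:R) = 1 + (b + (-1 : ℤ) • c)) (u : ℤ) (x : R) :
    (-1:ℤ) • b + (u • (1:R) + x) = u • (1:R) + ((-1:ℤ) • b + (u • c + x)) := by
  rw [← add_assoc, swap_one' b c hc1 hcb hb1 u]; simp only [add_assoc]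

/-- full swap: move a `1`-multiple left past a `b`-multiple. -/
theorem swap (hc1 : AddCommute c (1 : R)) (hcb : AddCommute c b)
    (hb1 : b + (1:R) = 1 + (b + (-1 : ℤ) • c)) (v u : ℤ) (x : R) :
    v • b + (u • (1:R) + x) = u • (1:R) + (v • b + ((-(v*u)) • c + x)) := by
  induction v using Int.induction_on generalizing x with
  | zero => simp
  | succ k ih =>
      calc ((k:ℤ)+1) • b + (u • (1:R) + x)
          = (k:ℤ) • b + (b + (u • (1:R) + x)) := by
            rw [add_zsmul, one_zsmul, add_assoc]
        _ = (k:ℤ) • b + (u • (1:R) + (b + ((-u) • c + x))) := by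
            rw [s1x b c hc1 hb1]
        _ = u • (1:R) + ((k:ℤ) • b + ((-((k:ℤ)*u)) • c + (b + ((-u) • c + x)))) := by
            rw [ih]
        _ = u • (1:R) + ((k:ℤ) • b + (b + ((-((k:ℤ)*u)) • c + ((-u) • c + x)))) := by
            rw [mcbone b c hcb]
        _ = u • (1:R) + (((k:ℤ)+1) • b + ((-(((k:ℤ)+1)*u)) • c + x)) := by
            rw [mbb1, mcc, show (-((k:ℤ)*u) + -u) = -(((k:ℤ)+1)*u) by ring]
  | pred k ih =>
      calc (-(k:ℤ)-1) • b + (u • (1:R) + x)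
          = (-(k:ℤ)) • b + ((-1:ℤ) • b + (u • (1:R) + x)) := by
            rw [show (-(k:ℤ)-1) = -(k:ℤ) + -1 by ring, add_zsmul, add_assoc]
        _ = (-(k:ℤ)) • b + (u • (1:R) + ((-1:ℤ) • b + (u • c + x))) := by
            rw [s1x' b c hc1 hcb hb1]
        _ = u • (1:R) + ((-(k:ℤ)) • b + ((-(-(k:ℤ)*u)) • c + ((-1:ℤ) • b + (u • c + x)))) := by
            rw [ih]
        _ = u • (1:R) + ((-(k:ℤ)) • b + ((-1:ℤ) • b + ((-(-(k:ℤ)*u)) • c + (u • c + x)))) := by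
            rw [mcb b c hcb]
        _ = u • (1:R) + ((-(k:ℤ)-1) • b + ((-((-(k:ℤ)-1)*u)) • c + x)) := by
            rw [mbb, mcc, show (-(k:ℤ) + -1) = -(k:ℤ)-1 by ring,
              show (-(-(k:ℤ)*u) + u) = -((-(k:ℤ)-1)*u) by ring]

/-- the group law in normal coordinates -/
theorem addE (hc1 : AddCommute c (1 : R)) (hcb : AddCommute c b)
    (hb1 : b + (1:R) = 1 + (b + (-1 : ℤ) • c)) (u1 v1 w1 u2 v2 w2 : ℤ) :
    zE b c u1 v1 w1 + zE b c u2 v2 w2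
      = zE b c (u1+u2) (v1+v2) (w1+w2 - v1*u2) := by
  unfold zE
  simp only [add_assoc]
  rw [mc1 c hc1 w1 u2, mcb b c hcb w1 v2, mcc',
    swap b c hc1 hcb hb1 v1 u2, m11,
    mcb b c hcb (-(v1*u2)) v2, mbb, mcc',
    show (-(v1*u2) + (w1+w2)) = w1+w2-v1*u2 by ring]

theorem zE_zero : zE b c 0 0 0 = (0:R) := by simp [zE]

theorem negE (hc1 : AddCommute c (1 : R)) (hcb : AddCommute c b)
    (hb1 : b + (1:R) = 1 + (b + (-1 : ℤ) • c)) (u v w : ℤ) :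
    -zE b c u v w = zE b c (-u) (-v) (-w - u*v) := by
  apply neg_eq_of_add_eq_zero_left
  rw [addE b c hc1 hcb hb1,
    zE_congr b c (show -u + u = 0 by ring) (show -v + v = 0 by ring)
      (show (-w - u*v) + w - (-v)*u = 0 by ring), zE_zero]

theorem nsmulE (hc1 : AddCommute c (1 : R)) (hcb : AddCommute c b)
    (hb1 : b + (1:R) = 1 + (b + (-1 : ℤ) • c)) (k : ℕ) (u v w : ℤ) :
    k • zE b c u v w
      = zE b c (k*u) (k*v) (k*w - (k.choose 2 : ℤ)*(u*v)) := by
  induction k with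
  | zero => simp [zE]
  | succ k ih =>
      rw [succ_nsmul, ih, addE b c hc1 hcb hb1]
      have hch : (k+1).choose 2 = k.choose 2 + k := by
        rw [Nat.choose_succ_succ, Nat.choose_one_right, Nat.add_comm]
      refine zE_congr b c ?_ ?_ ?_
      · push_cast; ring
      · push_cast; ring
      · rw [hch]; push_cast; ring

theorem red_zsmul {G : Type*} [AddGroup G] (N : ℕ) [NeZero N] (g : G)
    (hg : addOrderOf g = N) (u : ℤ) : u • g = ((u : ZMod N)).val • g := by
  have h1 : ((N:ℤ)) ∣ u - (((u : ZMod N)).val : ℤ) := by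
    have h2 : ((u - (((u : ZMod N)).val : ℤ) : ℤ) : ZMod N) = 0 := by
      push_cast
      rw [ZMod.natCast_val, ZMod.cast_id]
      ring
    exact (ZMod.intCast_zmod_eq_zero_iff_dvd _ N).mp h2
  obtain ⟨k, hk⟩ := h1
  have hu : u = (((u : ZMod N)).val : ℤ) + N * k := by linarith
  have hzero : ((N:ℤ) * k) • g = 0 := by
    calc ((N:ℤ)*k) • g = k • ((N:ℤ) • g) := by rw [mul_comm, mul_zsmul]
      _ = 0 := by rw [natCast_zsmul, ← hg, addOrderOf_nsmul_eq_zero, zsmul_zero]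
  conv_lhs => rw [hu]
  rw [add_zsmul, natCast_zsmul, hzero, add_zero]

end NRAux

/-- With `R`, `a = 1`, `b`, `c`, `α`, `β`, `γ` as in the paper, the congruences
`α(xy) ≡ x1·α(y) + α(x)·β(y) (mod p^m)`,
`β(xy) ≡ x2·α(y) + β(x)·β(y) (mod p^n)` and
`γ(xy) ≡ −x1x2·binom(α(y),2) − α(x)β(x)·binom(β(y),2) − x2α(x)α(y)β(y) + x3α(y)
+ γ(x)β(y) + x1β(x)γ(y) − x2α(x)γ(y) (mod p^d)` hold for all `x, y ∈ R`. -/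
theorem alpha_beta_gamma_mul
    (p m n d : ℕ) (hp : p.Prime) (hodd : Odd p)
    (hd : 1 ≤ d) (hdn : d ≤ n) (hnm : n ≤ m)
    (R : Type*) [LeftNearring R] (b c : R)
    (ha : addOrderOf (1 : R) = p ^ m) (hb : addOrderOf b = p ^ n)
    (hc : addOrderOf c = p ^ d)
    (hrel1 : -b + 1 + b = 1 + c) (hrel2 : -(1 : R) + c + 1 = c)
    (hrel3 : -b + c + b = c)
    (x1 x2 x3 : R → ℕ)
    (hx1 : ∀ x, x1 x < p ^ m) (hx2 : ∀ x, x2 x < p ^ n) (hx3 : ∀ x, x3 x < p ^ d)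
    (hrepr : ∀ x : R, x = x1 x • (1 : R) + x2 x • b + x3 x • c)
    (huniq : ∀ u1 u2 u3 : ℕ, u1 < p ^ m → u2 < p ^ n → u3 < p ^ d →
      ∀ x : R, x = u1 • (1 : R) + u2 • b + u3 • c →
        u1 = x1 x ∧ u2 = x2 x ∧ u3 = x3 x)
    (α : R → ZMod (p ^ m)) (β : R → ZMod (p ^ n)) (γ : R → ZMod (p ^ d))
    (hαβγ : ∀ x : R, x * b = (α x).val • (1 : R) + (β x).val • b + (γ x).val • c)
    : ∀ x y : R,
      α (x * y) = (x1 x : ZMod (p ^ m)) * α y +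
        α x * (ZMod.cast (β y) : ZMod (p ^ m)) ∧
      β (x * y) = (x2 x : ZMod (p ^ n)) * (ZMod.cast (α y) : ZMod (p ^ n)) +
        β x * β y ∧
      γ (x * y) =
        -((x1 x : ZMod (p ^ d)) * (x2 x : ZMod (p ^ d)) *
            ((α y).val.choose 2 : ZMod (p ^ d))) -
          (ZMod.cast (α x) : ZMod (p ^ d)) * (ZMod.cast (β x) : ZMod (p ^ d)) *
            ((β y).val.choose 2 : ZMod (p ^ d)) -
          (x2 x : ZMod (p ^ d)) * (ZMod.cast (α x) : ZMod (p ^ d)) *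
            (ZMod.cast (α y) : ZMod (p ^ d)) * (ZMod.cast (β y) : ZMod (p ^ d)) +
          (x3 x : ZMod (p ^ d)) * (ZMod.cast (α y) : ZMod (p ^ d)) +
          γ x * (ZMod.cast (β y) : ZMod (p ^ d)) +
          (x1 x : ZMod (p ^ d)) * (ZMod.cast (β x) : ZMod (p ^ d)) * γ y -
          (x2 x : ZMod (p ^ d)) * (ZMod.cast (α x) : ZMod (p ^ d)) * γ y := by
  have hpm : NeZero (p ^ m) := ⟨pow_ne_zero m hp.pos.ne'⟩
  have hpn : NeZero (p ^ n) := ⟨pow_ne_zero n hp.pos.ne'⟩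
  have hpd : NeZero (p ^ d) := ⟨pow_ne_zero d hp.pos.ne'⟩
  -- basic additive commutation facts
  have hc1 : AddCommute c (1 : R) := by
    show c + 1 = 1 + c
    conv_rhs => rw [← hrel2]
    simp only [add_assoc, add_neg_cancel_left]
  have hcb : AddCommute c b := by
    show c + b = b + c
    conv_rhs => rw [← hrel3]
    simp only [add_assoc, add_neg_cancel_left]
  have e1b : (1:R) + b = b + ((1:R) + c) := by
    have e := congrArg (fun z : R => b + z) hrel1
    simpa only [add_assoc, add_neg_cancel_left] using e
  have hb1 : b + (1:R) = 1 + (b + (-1 : ℤ) • c) := by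
    rw [show ((-1:ℤ) • c : R) = -c by simp]
    have : (1:R) + (b + -c) = b + 1 := by
      rw [← add_assoc, e1b]
      simp only [add_assoc, add_neg_cancel, add_zero]
    exact this.symm
  -- nearring multiplication facts
  have hld : ∀ x y z : R, x * (y + z) = x * y + x * z := LeftNearring.left_distrib
  have h0 : ∀ z : R, z * 0 = 0 := by
    intro z
    have h := hld z 0 0
    rw [add_zero] at h
    exact (left_eq_add.mp h)
  have hmneg : ∀ z g : R, z * (-g) = -(z * g) := by
    intro z g
    have h := hld z g (-g)
    rw [add_neg_cancel, h0] at h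
    exact (neg_eq_of_add_eq_zero_right h.symm).symm
  have hmns : ∀ (z g : R) (k : ℕ), z * (k • g) = k • (z * g) := by
    intro z g k
    induction k with
    | zero => simp [h0]
    | succ k ih => rw [succ_nsmul, hld, ih, succ_nsmul]
  intro x y
  -- normal forms
  have hx1' : x * 1 = NRAux.zE b c (x1 x) (x2 x) (x3 x) := by
    rw [mul_one]
    simp only [NRAux.zE, natCast_zsmul]
    exact hrepr x
  have hxb' : x * b = NRAux.zE b c ((α x).val) ((β x).val) ((γ x).val) := by
    simp only [NRAux.zE, natCast_zsmul]
    exact hαβγ x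
  have hc_eq : c = -(1:R) + (-b + ((1:R) + b)) := by
    rw [show -b + ((1:R) + b) = -b + 1 + b by rw [add_assoc], hrel1,
      neg_add_cancel_left]
  have hxc' : x * c = NRAux.zE b c 0 0
      ((x1 x : ℤ) * ((β x).val : ℤ) - (x2 x : ℤ) * ((α x).val : ℤ)) := by
    conv_lhs => rw [hc_eq, hld, hld, hld, hmneg, hmneg, hx1', hxb']
    rw [NRAux.negE b c hc1 hcb hb1, NRAux.negE b c hc1 hcb hb1,
      NRAux.addE b c hc1 hcb hb1, NRAux.addE b c hc1 hcb hb1,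
      NRAux.addE b c hc1 hcb hb1]
    exact NRAux.zE_congr b c (by push_cast; ring) (by push_cast; ring)
      (by push_cast; ring)
  -- the three integer coordinates of (x*y)*b
  set A : ℕ := (α y).val with hA
  set B : ℕ := (β y).val with hB
  set G : ℕ := (γ y).val with hG
  have hzb2 : (x * y) * b = NRAux.zE b c
      ((A : ℤ) * (x1 x) + (B : ℤ) * ((α x).val))
      ((A : ℤ) * (x2 x) + (B : ℤ) * ((β x).val))
      ((A : ℤ) * (x3 x) - (A.choose 2 : ℤ) * ((x1 x : ℤ) * (x2 x))
        + ((B : ℤ) * ((γ x).val) - (B.choose 2 : ℤ) * (((α x).val : ℤ) * ((β x).val)))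
        - ((A : ℤ) * (x2 x)) * ((B : ℤ) * ((α x).val))
        + (G : ℤ) * ((x1 x : ℤ) * ((β x).val) - (x2 x : ℤ) * ((α x).val))) := by
    calc (x * y) * b = x * (y * b) := mul_assoc x y b
      _ = x * (A • (1:R) + B • b + G • c) := by rw [hαβγ y]
      _ = (x * (A • (1:R)) + x * (B • b)) + x * (G • c) := by rw [hld, hld]
      _ = (A • (x * 1) + B • (x * b)) + G • (x * c) := by
          rw [hmns, hmns, hmns]
      _ = (A • NRAux.zE b c (x1 x) (x2 x) (x3 x)
            + B • NRAux.zE b c ((α x).val) ((β x).val) ((γ x).val))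
            + G • NRAux.zE b c 0 0
              ((x1 x : ℤ) * ((β x).val : ℤ) - (x2 x : ℤ) * ((α x).val : ℤ)) := by
          rw [hxc', hxb', hx1']
      _ = _ := by
          rw [NRAux.nsmulE b c hc1 hcb hb1, NRAux.nsmulE b c hc1 hcb hb1,
            NRAux.nsmulE b c hc1 hcb hb1,
            NRAux.addE b c hc1 hcb hb1, NRAux.addE b c hc1 hcb hb1]
          exact NRAux.zE_congr b c (by push_cast; ring) (by push_cast; ring)
            (by push_cast; ring)
  set U : ℤ := (A : ℤ) * (x1 x) + (B : ℤ) * ((α x).val) with hU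
  set V : ℤ := (A : ℤ) * (x2 x) + (B : ℤ) * ((β x).val) with hV
  set W : ℤ := (A : ℤ) * (x3 x) - (A.choose 2 : ℤ) * ((x1 x : ℤ) * (x2 x))
        + ((B : ℤ) * ((γ x).val) - (B.choose 2 : ℤ) * (((α x).val : ℤ) * ((β x).val)))
        - ((A : ℤ) * (x2 x)) * ((B : ℤ) * ((α x).val))
        + (G : ℤ) * ((x1 x : ℤ) * ((β x).val) - (x2 x : ℤ) * ((α x).val)) with hW
  have hform2 : (x * y) * b = ((U : ZMod (p^m))).val • (1:R)
      + ((V : ZMod (p^n))).val • b + ((W : ZMod (p^d))).val • c := by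
    rw [hzb2]
    rw [NRAux.zE, NRAux.red_zsmul (p^m) (1:R) ha U,
      NRAux.red_zsmul (p^n) b hb V, NRAux.red_zsmul (p^d) c hc W]
  have t1 := huniq _ _ _ (ZMod.val_lt _) (ZMod.val_lt _) (ZMod.val_lt _)
    ((x*y)*b) (hαβγ (x*y))
  have t2 := huniq _ _ _ (ZMod.val_lt _) (ZMod.val_lt _) (ZMod.val_lt _)
    ((x*y)*b) hform2
  have eα : α (x*y) = ((U : ZMod (p^m))) :=
    ZMod.val_injective _ (t1.1.trans t2.1.symm)
  have eβ : β (x*y) = ((V : ZMod (p^n))) :=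
    ZMod.val_injective _ (t1.2.1.trans t2.2.1.symm)
  have eγ : γ (x*y) = ((W : ZMod (p^d))) :=
    ZMod.val_injective _ (t1.2.2.trans t2.2.2.symm)
  refine ⟨?_, ?_, ?_⟩
  · rw [eα, hU, hA, hB]
    push_cast
    simp only [ZMod.natCast_val, ZMod.cast_id]
    ring
  · rw [eβ, hV, hA, hB]
    push_cast
    simp only [ZMod.natCast_val, ZMod.cast_id]
    ring
  · rw [eγ, hW, hA, hB, hG]
    push_cast
    simp only [ZMod.natCast_val, ZMod.cast_id]
    ring
end

section
/- With R, a, b, c, α, β, γ as described, the nearring R is zero-symmetric (i.e. 0·x = 0 for all x ∈ R) if and only if α(0) ≡ 0 (mod p^m), β(0) ≡ 0 (mod p^n) and γ(0) ≡ 0 (mod p^d). -/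
/-- With `R`, `a = 1`, `b`, `c`, `α`, `β`, `γ` as in the paper, the nearring `R` is
zero-symmetric (i.e. `0·x = 0` for all `x ∈ R`) if and only if
`α(0) ≡ 0 (mod p^m)`, `β(0) ≡ 0 (mod p^n)` and `γ(0) ≡ 0 (mod p^d)`. -/
theorem zero_symmetric_iff
    (p m n d : ℕ) (hp : p.Prime) (hodd : Odd p)
    (hd : 1 ≤ d) (hdn : d ≤ n) (hnm : n ≤ m)
    (R : Type*) [LeftNearring R] (b c : R)
    (ha : addOrderOf (1 : R) = p ^ m) (hb : addOrderOf b = p ^ n)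
    (hc : addOrderOf c = p ^ d)
    (hrel1 : -b + 1 + b = 1 + c) (hrel2 : -(1 : R) + c + 1 = c)
    (hrel3 : -b + c + b = c)
    (x1 x2 x3 : R → ℕ)
    (hx1 : ∀ x, x1 x < p ^ m) (hx2 : ∀ x, x2 x < p ^ n) (hx3 : ∀ x, x3 x < p ^ d)
    (hrepr : ∀ x : R, x = x1 x • (1 : R) + x2 x • b + x3 x • c)
    (huniq : ∀ u1 u2 u3 : ℕ, u1 < p ^ m → u2 < p ^ n → u3 < p ^ d →
      ∀ x : R, x = u1 • (1 : R) + u2 • b + u3 • c →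
        u1 = x1 x ∧ u2 = x2 x ∧ u3 = x3 x)
    (α : R → ZMod (p ^ m)) (β : R → ZMod (p ^ n)) (γ : R → ZMod (p ^ d))
    (hαβγ : ∀ x : R, x * b = (α x).val • (1 : R) + (β x).val • b + (γ x).val • c)
    : (∀ x : R, 0 * x = 0) ↔ (α 0 = 0 ∧ β 0 = 0 ∧ γ 0 = 0) := by
  haveI : NeZero (p ^ m) := ⟨pow_ne_zero _ hp.pos.ne'⟩
  haveI : NeZero (p ^ n) := ⟨pow_ne_zero _ hp.pos.ne'⟩
  haveI : NeZero (p ^ d) := ⟨pow_ne_zero _ hp.pos.ne'⟩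
  have ldist := LeftNearring.left_distrib (R := R)
  have hmul0 : ∀ x : R, x * 0 = 0 := by
    intro x
    have h := ldist x 0 0
    rw [add_zero] at h
    exact (add_eq_left.mp h.symm)
  have hmulneg : ∀ x y : R, x * (-y) = -(x * y) := by
    intro x y
    have h : x * y + x * (-y) = 0 := by
      rw [← ldist, add_neg_cancel, hmul0]
    exact (neg_eq_of_add_eq_zero_right h).symm
  have hmulsmul : ∀ (x : R) (k : ℕ) (y : R), x * (k • y) = k • (x * y) := by
    intro x k y
    induction k with
    | zero => simp [hmul0]
    | succ k ih => rw [succ_nsmul, succ_nsmul, ldist, ih]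
  constructor
  · intro h
    have h0b : (0 : R) = (α 0).val • (1 : R) + (β 0).val • b + (γ 0).val • c := by
      have := hαβγ 0
      rwa [h b] at this
    have h1 := huniq (α 0).val (β 0).val (γ 0).val (ZMod.val_lt _) (ZMod.val_lt _)
      (ZMod.val_lt _) 0 h0b
    have h2 := huniq 0 0 0 (pow_pos hp.pos m) (pow_pos hp.pos n) (pow_pos hp.pos d)
      0 (by simp)
    refine ⟨?_, ?_, ?_⟩
    · have : (α 0).val = 0 := h1.1.trans h2.1.symm
      simpa [ZMod.val_eq_zero] using this
    · have : (β 0).val = 0 := h1.2.1.trans h2.2.1.symm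
      simpa [ZMod.val_eq_zero] using this
    · have : (γ 0).val = 0 := h1.2.2.trans h2.2.2.symm
      simpa [ZMod.val_eq_zero] using this
  · rintro ⟨hα, hβ, hγ⟩
    have h0b : (0 : R) * b = 0 := by
      rw [hαβγ 0, hα, hβ, hγ]
      simp
    have h01 : (0 : R) * 1 = 0 := mul_one 0
    have h0c : (0 : R) * c = 0 := by
      have h : (0 : R) * (1 + c) = 0 * (-b + 1 + b) := by rw [hrel1]
      rw [ldist, ldist, ldist, hmulneg, h01, h0b] at h
      simpa using h
    intro x
    rw [hrepr x, ldist, ldist, hmulsmul, hmulsmul, hmulsmul, h01, h0b, h0c]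
    simp
end

section
/- For every odd prime p and all integers m, n, d with 1 ≤ d ≤ n ≤ m, there exists a local nearring R whose additive group (R,+) is isomorphic to the group G(p^m, p^n, p^d); in particular, every group G(p^m, p^n, p^d) is the additive group of a nearring with identity. -/
/-! ### Auxiliary construction -/

/-- One half, in `ZMod (p^d)` (for `p` odd this is the inverse of `2`). -/
def Nhalf (p d : ℕ) : ZMod (p ^ d) := (((p ^ d + 1) / 2 : ℕ) : ZMod (p ^ d))

/-- The nearring multiplication. -/
def Nmul (p m n d : ℕ) (x y : GCar p m n d) : GCar p m n d :=
  (x.1 * y.1,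
   (ZMod.cast x.1 : ZMod (p ^ n)) * y.2.1 + x.2.1 * (ZMod.cast y.1 : ZMod (p ^ n)),
   (ZMod.cast x.1 : ZMod (p ^ d)) ^ 2 * y.2.2
     - Nhalf p d * (ZMod.cast x.2.1 : ZMod (p ^ d)) * (ZMod.cast x.1 : ZMod (p ^ d))
         * (ZMod.cast y.1 : ZMod (p ^ d)) ^ 2
     + (x.2.2 + Nhalf p d * (ZMod.cast x.1 : ZMod (p ^ d)) * (ZMod.cast x.2.1 : ZMod (p ^ d)))
         * (ZMod.cast y.1 : ZMod (p ^ d)))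

lemma Nhalf_spec (p d : ℕ) (hodd : Odd p) : (2 : ZMod (p ^ d)) * Nhalf p d = 1 := by
  have hodd' : Odd (p ^ d) := hodd.pow
  have h2' : 2 * ((p ^ d + 1) / 2) = p ^ d + 1 :=
    Nat.mul_div_cancel' (even_iff_two_dvd.mp hodd'.add_one)
  have : ((2 * ((p ^ d + 1) / 2) : ℕ) : ZMod (p ^ d)) = ((p ^ d + 1 : ℕ) : ZMod (p ^ d)) := by
    rw [h2']
  unfold Nhalf
  push_cast at this ⊢
  rw [this]
  have hz : ((p : ZMod (p ^ d))) ^ d = 0 := by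
    exact_mod_cast ZMod.natCast_self (p ^ d)
  rw [hz, zero_add]

lemma cast_cast_eq (p m n d : ℕ) (hdn : d ≤ n) (hnm : n ≤ m) (a : ZMod (p ^ m)) :
    (ZMod.cast (ZMod.cast a : ZMod (p ^ n)) : ZMod (p ^ d)) = (ZMod.cast a : ZMod (p ^ d)) := by
  have hdn' : (p : ℕ) ^ d ∣ p ^ n := pow_dvd_pow p hdn
  have hnm' : (p : ℕ) ^ n ∣ p ^ m := pow_dvd_pow p hnm
  exact RingHom.congr_fun (ZMod.castHom_comp hdn' hnm') a

/-- The additive group of the nearring: the group `G(p^m,p^n,p^d)` written additively. -/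
def NaddGroup (p m n d : ℕ) (hdn : d ≤ n) (hdm : d ≤ m) : AddGroup (GCar p m n d) :=
  letI : Group (GCar p m n d) := Ggroup p m n d hdn hdm
  letI : Add (GCar p m n d) := ⟨fun x y => x * y⟩
  letI : Zero (GCar p m n d) := ⟨(1 : GCar p m n d)⟩
  letI : Neg (GCar p m n d) := ⟨fun x => x⁻¹⟩
  AddGroup.ofLeftAxioms mul_assoc one_mul inv_mul_cancel

/-- The local nearring structure. -/
def Ninst (p m n d : ℕ) (hodd : Odd p) (hdn : d ≤ n) (hnm : n ≤ m) :
    LeftNearring (GCar p m n d) :=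
  have hdm : d ≤ m := hdn.trans hnm
  have hdn' : (p : ℕ) ^ d ∣ p ^ n := pow_dvd_pow p hdn
  have hdm' : (p : ℕ) ^ d ∣ p ^ m := pow_dvd_pow p hdm
  have hnm' : (p : ℕ) ^ n ∣ p ^ m := pow_dvd_pow p hnm
  have ccc := cast_cast_eq p m n d hdn hnm
  have h2 := Nhalf_spec p d hodd
  { NaddGroup p m n d hdn hdm with
    mul := Nmul p m n d
    one := ((1, 0, 0) : ZMod (p ^ m) × ZMod (p ^ n) × ZMod (p ^ d))
    mul_assoc := fun x y z => by
      show Nmul p m n d (Nmul p m n d x y) z = Nmul p m n d x (Nmul p m n d y z)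
      refine Prod.ext ?_ (Prod.ext ?_ ?_) <;>
        simp [Nmul, ZMod.cast_mul hdn', ZMod.cast_add hdn', ZMod.cast_mul hdm',
          ZMod.cast_mul hnm', ZMod.cast_add hnm', ccc] <;> ring
    one_mul := fun x => by
      show Nmul p m n d ((1, 0, 0) : ZMod (p ^ m) × ZMod (p ^ n) × ZMod (p ^ d)) x = x
      refine Prod.ext ?_ (Prod.ext ?_ ?_) <;>
        simp [Nmul, ZMod.cast_one hdn', ZMod.cast_one hdm', ZMod.cast_one hnm',
          ZMod.cast_zero]
    mul_one := fun x => by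
      show Nmul p m n d x ((1, 0, 0) : ZMod (p ^ m) × ZMod (p ^ n) × ZMod (p ^ d)) = x
      refine Prod.ext ?_ (Prod.ext ?_ ?_) <;>
        simp [Nmul, ZMod.cast_one hdn', ZMod.cast_one hdm', ZMod.cast_one hnm',
          ZMod.cast_zero] <;> ring
    left_distrib := fun x y z => by
      show Nmul p m n d x (Gmul p m n d y z) = Gmul p m n d (Nmul p m n d x y) (Nmul p m n d x z)
      refine Prod.ext ?_ (Prod.ext ?_ ?_)
      · show x.1 * (y.1 + z.1) = x.1 * y.1 + x.1 * z.1
        ring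
      · simp [Nmul, Gmul, ZMod.cast_add hnm']
        ring
      · simp [Nmul, Gmul, ZMod.cast_mul hdn', ZMod.cast_add hdn', ZMod.cast_mul hdm',
          ZMod.cast_add hdm', ccc]
        linear_combination (-( (ZMod.cast x.1 : ZMod (p ^ d)) * (ZMod.cast x.2.1 : ZMod (p ^ d))
          * (ZMod.cast y.1 : ZMod (p ^ d)) * (ZMod.cast z.1 : ZMod (p ^ d)) )) * h2 }

/-- For every odd prime `p` and all `1 ≤ d ≤ n ≤ m` there exists a local nearring `R`
whose additive group `(R,+)` is isomorphic to the group `G(p^m, p^n, p^d)`; in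
particular, every group `G(p^m, p^n, p^d)` is the additive group of a nearring with
identity. -/
theorem exists_local_nearring (p m n d : ℕ) (hp : p.Prime) (hodd : Odd p)
    (hd : 1 ≤ d) (hdn : d ≤ n) (hnm : n ≤ m) :
    letI : Group (GCar p m n d) := Ggroup p m n d hdn (hdn.trans hnm)
    ∃ (R : Type) (inst : LeftNearring R),
      letI := inst
      (∃ L : AddSubgroup R, ∀ x : R, x ∈ L ↔ ¬IsUnit x) ∧
      Nonempty (Multiplicative R ≃* GCar p m n d) := by
  have hdm : d ≤ m := hdn.trans hnm
  have hdn' : (p : ℕ) ^ d ∣ p ^ n := pow_dvd_pow p hdn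
  have hdm' : (p : ℕ) ^ d ∣ p ^ m := pow_dvd_pow p hdm
  have hnm' : (p : ℕ) ^ n ∣ p ^ m := pow_dvd_pow p hnm
  have ccc := cast_cast_eq p m n d hdn hnm
  have h2 := Nhalf_spec p d hodd
  haveI : Fact p.Prime := ⟨hp⟩
  haveI : NeZero (p ^ m) := ⟨pow_ne_zero _ hp.ne_zero⟩
  refine ⟨GCar p m n d, Ninst p m n d hodd hdn hnm, ?_, ?_⟩
  · -- locality
    letI := Ninst p m n d hodd hdn hnm
    have hpm : (p : ℕ) ∣ p ^ m := dvd_pow_self p (by omega)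
    -- the additive homomorphism  x ↦ x.1 mod p
    refine ⟨AddMonoidHom.ker
      { toFun := fun x : GCar p m n d => (ZMod.cast x.1 : ZMod p)
        map_zero' := by
          show (ZMod.cast ((0,0,0) : GCar p m n d).1 : ZMod p) = 0
          simp [ZMod.cast_zero]
        map_add' := fun a b => by
          show (ZMod.cast (Gmul p m n d a b).1 : ZMod p) = _
          simp [Gmul, ZMod.cast_add hpm] }, fun x => ?_⟩
    rw [AddMonoidHom.mem_ker]
    show (ZMod.cast x.1 : ZMod p) = 0 ↔ ¬ IsUnit x
    constructor
    · intro hx hu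
      obtain ⟨y, hy⟩ := IsUnit.exists_right_inv hu
      have h1 : x.1 * y.1 = 1 := congrArg Prod.fst hy
      have := congrArg (ZMod.castHom hpm (ZMod p)) h1
      simp only [map_mul, map_one, ZMod.castHom_apply] at this
      rw [hx, zero_mul] at this
      exact zero_ne_one this
    · intro hx
      by_contra hmem
      apply hx
      -- x.1 is a unit in ZMod (p^m)
      have hvx : ¬ (p ∣ x.1.val) := by
        intro hdvd
        apply hmem
        have : ((x.1.val : ℕ) : ZMod p) = 0 := (ZMod.natCast_eq_zero_iff _ _).mpr hdvd
        rwa [ZMod.natCast_val] at this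
      have hu1 : IsUnit x.1 := by
        have : IsUnit ((x.1.val : ℕ) : ZMod (p ^ m)) := by
          rw [ZMod.isUnit_iff_coprime]
          exact Nat.Coprime.pow_right _ (((Nat.Prime.coprime_iff_not_dvd hp).mpr hvx).symm)
        rwa [ZMod.natCast_val, ZMod.cast_id] at this
      -- construct the explicit inverse
      set u := hu1.unit with hu
      set w := (ZMod.cast ((↑u⁻¹ : (ZMod (p ^ m))ˣ) : ZMod (p ^ m)) : ZMod (p ^ d)) with hwdef
      set wn := (ZMod.cast ((↑u⁻¹ : (ZMod (p ^ m))ˣ) : ZMod (p ^ m)) : ZMod (p ^ n)) with hwndef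
      have hx1 : x.1 = (u : ZMod (p ^ m)) := hu1.unit_spec.symm
      have hmu : x.1 * ((↑u⁻¹ : (ZMod (p ^ m))ˣ) : ZMod (p ^ m)) = 1 := by
        rw [hx1]; exact_mod_cast u.mul_inv
      have hmu' : ((↑u⁻¹ : (ZMod (p ^ m))ˣ) : ZMod (p ^ m)) * x.1 = 1 := by
        rw [hx1]; exact_mod_cast u.inv_mul
      have hw : (ZMod.cast x.1 : ZMod (p ^ d)) * w = 1 := by
        have := congrArg (fun t => (ZMod.cast t : ZMod (p ^ d))) hmu
        simpa [ZMod.cast_mul hdm', ZMod.cast_one hdm'] using this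
      have hwn : (ZMod.cast x.1 : ZMod (p ^ n)) * wn = 1 := by
        have := congrArg (fun t => (ZMod.cast t : ZMod (p ^ n))) hmu
        simpa [ZMod.cast_mul hnm', ZMod.cast_one hnm'] using this
      refine isUnit_iff_exists.mpr ⟨((↑u⁻¹ : (ZMod (p ^ m))ˣ), -(x.2.1 * wn ^ 2),
        w ^ 2 * (Nhalf p d * (ZMod.cast x.2.1 : ZMod (p ^ d)) * (ZMod.cast x.1 : ZMod (p ^ d)) * w ^ 2
          - (x.2.2 + Nhalf p d * (ZMod.cast x.1 : ZMod (p ^ d)) * (ZMod.cast x.2.1 : ZMod (p ^ d))) * w)), ?_, ?_⟩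
      · show Nmul p m n d x _ = ((1, 0, 0) : ZMod (p ^ m) × ZMod (p ^ n) × ZMod (p ^ d))
        refine Prod.ext ?_ (Prod.ext ?_ ?_)
        · exact hmu
        · show (ZMod.cast x.1 : ZMod (p ^ n)) * (-(x.2.1 * wn ^ 2)) + x.2.1 * wn = 0
          linear_combination (-(x.2.1 * wn)) * hwn
        · simp only [Nmul, ← hwdef]
          linear_combination (-(x.2.2) * w
            - (ZMod.cast x.1 : ZMod (p ^ d)) * x.2.2 * w ^ 2
            - (ZMod.cast x.1 : ZMod (p ^ d)) * (ZMod.cast x.2.1 : ZMod (p ^ d)) * Nhalf p d * w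
            + (ZMod.cast x.1 : ZMod (p ^ d)) * (ZMod.cast x.2.1 : ZMod (p ^ d)) * Nhalf p d * w ^ 2
            - (ZMod.cast x.1 : ZMod (p ^ d)) ^ 2 * (ZMod.cast x.2.1 : ZMod (p ^ d)) * Nhalf p d * w ^ 2
            + (ZMod.cast x.1 : ZMod (p ^ d)) ^ 2 * (ZMod.cast x.2.1 : ZMod (p ^ d)) * Nhalf p d * w ^ 3) * hw
      · show Nmul p m n d _ x = ((1, 0, 0) : ZMod (p ^ m) × ZMod (p ^ n) × ZMod (p ^ d))
        refine Prod.ext ?_ (Prod.ext ?_ ?_)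
        · exact hmu'
        · show wn * x.2.1 + (-(x.2.1 * wn ^ 2)) * (ZMod.cast x.1 : ZMod (p ^ n)) = 0
          linear_combination (-(x.2.1 * wn)) * hwn
        · simp only [Nmul, ← hwdef, ← hwndef, ZMod.cast_neg hdn', ZMod.cast_mul hdn',
            ZMod.cast_pow hdn', ccc,
            (by rw [hwndef, hwdef, ccc] : (ZMod.cast wn : ZMod (p ^ d)) = w)]
          linear_combination (-(x.2.2) * w ^ 2
            + (ZMod.cast x.1 : ZMod (p ^ d)) * (ZMod.cast x.2.1 : ZMod (p ^ d)) * Nhalf p d * w ^ 3) * hw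
  · -- the isomorphism
    refine Nonempty.intro
      (@MulEquiv.mk (Multiplicative (GCar p m n d)) (GCar p m n d)
        (@Multiplicative.mul (GCar p m n d) (@AddSemigroup.toAdd _
          (@AddMonoid.toAddSemigroup _ (@SubNegMonoid.toAddMonoid _
            (@AddGroup.toSubNegMonoid _ (@LeftNearring.toAddGroup _
              (Ninst p m n d hodd hdn hnm)))))))
        (@MulOne.toMul _ (@MulOneClass.toMulOne _ (@Monoid.toMulOneClass _ (@DivInvMonoid.toMonoid _
          (@Group.toDivInvMonoid _ (Ggroup p m n d hdn hdm))))))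
        (Equiv.refl (GCar p m n d)) (fun a b => rfl))
end
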